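/- arXiv:2507.06852 — 9 statements merged into one kernel-verified Lean document; each statement's English description precedes it below -/
import Mathlib

section
/- If F = (A, R) is a finitary argumentation framework, then there exists a well-ordering < of A such that every argument a ∈ A attacks only finitely many arguments b with b < a (i.e., for each a the set {b ∈ A | a ↦ b and b < a} is finite). -/
/-!
Basic notions of abstract argumentation frameworks, following
Andrews–San Mauro, "SCC-recursiveness in infinite argumentation".
-/

universe u

/-- An argumentation framework: a set `A` of arguments together with an
attack relation `R ⊆ A × A`. -/
structure AF (α : Type u) where
  A : Set α
  R : α → α → Prop
  attack_mem : ∀ ⦃a b : α⦄, R a b → a ∈ A ∧ b ∈ A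

namespace AF

variable {α : Type u}

/-- The restriction `F↾U = (A ∩ U, R ∩ (U × U))`. -/
def restrict (F : AF α) (U : Set α) : AF α where
  A := F.A ∩ U
  R a b := F.R a b ∧ a ∈ U ∧ b ∈ U
  attack_mem := by
    intro a b h
    exact ⟨⟨(F.attack_mem h.1).1, h.2.1⟩, ⟨(F.attack_mem h.1).2, h.2.2⟩⟩

/-- `S` is conflict-free: `S ⊆ A` and no argument of `S` attacks another. -/
def ConflictFree (F : AF α) (S : Set α) : Prop :=
  S ⊆ F.A ∧ ∀ a ∈ S, ∀ b ∈ S, ¬ F.R a b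

/-- `S` is a naive extension: conflict-free and ⊆-maximal among conflict-free sets. -/
def Naive (F : AF α) (S : Set α) : Prop :=
  ConflictFree F S ∧ ∀ T, ConflictFree F T → S ⊆ T → S = T

/-- `S⁺`: the set of arguments attacked by `S`. -/
def plus (F : AF α) (S : Set α) : Set α := {x | ∃ y ∈ S, F.R y x}

/-- The range `S⊕ = S ∪ S⁺`. -/
def rng (F : AF α) (S : Set α) : Set α := S ∪ plus F S

/-- `S` is a stage extension: conflict-free with ⊆-maximal range among
conflict-free sets. -/
def Stage (F : AF α) (S : Set α) : Prop :=
  ConflictFree F S ∧ ¬ ∃ T, ConflictFree F T ∧ rng F S ⊂ rng F T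

/-- `F` is finitary: every argument has finitely many attackers. -/
def Finitary (F : AF α) : Prop := ∀ a, {x | F.R x a}.Finite

/-- There is a directed path from `a` to `b` in `F` (both being arguments of `F`). -/
def Reach (F : AF α) (a b : α) : Prop :=
  a ∈ F.A ∧ b ∈ F.A ∧ Relation.ReflTransGen F.R a b

/-- The strongly connected component of `a` in `F`. -/
def SCCof (F : AF α) (a : α) : Set α := {b | Reach F a b ∧ Reach F b a}

/-- `X` is a strongly connected component of `F`. -/
def IsSCC (F : AF α) (X : Set α) : Prop := ∃ a ∈ F.A, X = SCCof F a

/-- `D_S(X)`: the elements of `X` attacked by an element of `S` outside `X`. -/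
def Dset (F : AF α) (S X : Set α) : Set α := {b ∈ X | ∃ a ∈ S \ X, F.R a b}

/-- `S` is a cf1.5-extension of `F`. -/
def CF15 (F : AF α) (S : Set α) : Prop :=
  ConflictFree F S ∧
    ∀ X, IsSCC F X → Naive (F.restrict (X \ Dset F S X)) (S ∩ X)

/-- `S` is a stg1.5-extension of `F`. -/
def STG15 (F : AF α) (S : Set α) : Prop :=
  ConflictFree F S ∧
    ∀ X, IsSCC F X → Stage (F.restrict (X \ Dset F S X)) (S ∩ X)

/-- `C_S^α(a)`, defined by transfinite recursion. -/
noncomputable def Cseq (F : AF α) (S : Set α) (a : α) (o : Ordinal.{0}) : Set α :=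
  Ordinal.limitRecOn o (SCCof F a)
    (fun _ C => SCCof (F.restrict (C \ Dset F S C)) a)
    (fun o' _ ih => SCCof (F.restrict (⋂ β : {β : Ordinal.{0} // β < o'}, ih β.1 β.2)) a)

/-- The component ordinal `α_S(a)`: the least `α` with `a ∉ C_S^α(a)` or
`C_S^{α+1}(a) = C_S^α(a)`. -/
noncomputable def alphaS (F : AF α) (S : Set α) (a : α) : Ordinal.{0} :=
  sInf {o | a ∉ Cseq F S a o ∨ Cseq F S a (o + 1) = Cseq F S a o}

/-- `S` is an icft-extension (tfcf2-extension) of `F`. -/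
def ICFT (F : AF α) (S : Set α) : Prop :=
  ConflictFree F S ∧ ∀ a ∈ F.A,
    a ∉ Cseq F S a (alphaS F S a) ∨
      Naive (F.restrict (Cseq F S a (alphaS F S a))) (S ∩ Cseq F S a (alphaS F S a))

/-- `S` is an istgt-extension (tf-stg2-extension) of `F`. -/
def ISTGT (F : AF α) (S : Set α) : Prop :=
  ConflictFree F S ∧ ∀ a ∈ F.A,
    a ∉ Cseq F S a (alphaS F S a) ∨
      Stage (F.restrict (Cseq F S a (alphaS F S a))) (S ∩ Cseq F S a (alphaS F S a))

/-- The characteristic function `f_F`. -/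
def charF (F : AF α) (S : Set α) : Set α :=
  {x ∈ F.A | ∀ y, F.R y x → ∃ z ∈ S, F.R z y}

/-- `G` is the grounded extension of `F`: the least fixed point of `f_F`. -/
def IsGrounded (F : AF α) (G : Set α) : Prop :=
  charF F G = G ∧ ∀ T, charF F T = T → G ⊆ T

/-- `conf(F)`: the set of conflicting pairs of `F`. -/
def confl (F : AF α) : Set (α × α) := {p | F.R p.1 p.2 ∨ F.R p.2 p.1}

/-- The operator `Δ_{F,S}(D)`. -/
def DeltaOp (F : AF α) (S D : Set α) : Set α :=
  {a ∈ F.A | ∃ b ∈ S, F.R b a ∧ ¬ Reach (F.restrict (F.A \ D)) a b}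

/-- `Δ^α_{F,S}`, defined by transfinite recursion. -/
noncomputable def Deltaseq (F : AF α) (S : Set α) (o : Ordinal.{0}) : Set α :=
  Ordinal.limitRecOn o (∅ : Set α)
    (fun _ D => DeltaOp F S D)
    (fun o' _ ih => ⋃ β : {β : Ordinal.{0} // β < o'}, ih β.1 β.2)

/-- The least fixed point `Δ_{F,S}` of the monotone operator `Δ_{F,S}(·)`,
given by Knaster–Tarski as the intersection of all prefixed points. -/
def DeltaFix (F : AF α) (S : Set α) : Set α :=
  ⋂₀ {D | DeltaOp F S D ⊆ D}

end AF

/-!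
Fix an arbitrary well-order `w` of the arguments (`WellOrderingRel`) and send every argument `x`
to its root `leastReachable`, the `w`-least argument reachable from `x` along attacks. The
arguments reaching a given root form a countable set (attackers are finite at every step), so
each can be numbered injectively by `ℕ`. Order arguments lexicographically by (root, number).
If `a` attacks `b`, then `a` reaches everything `b` reaches, so the root of `a` is at most that
of `b`; hence `b` can only precede `a` when both share a root and `b` has a smaller number,
which leaves finitely many `b`.
-/

open Relation

namespace Relation

variable {β : Type*} (R : β → β → Prop)

def ancestorsWithin (a : β) : ℕ → Set β
  | 0 => {a}
  | n + 1 => ancestorsWithin a n ∪ ⋃ b ∈ ancestorsWithin a n, {x | R x b}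

noncomputable def leastReachable (x : β) : β :=
  WellOrderingRel.isWellOrder.wf.min {c | ReflTransGen R x c} ⟨x, ReflTransGen.refl⟩

variable {R}

theorem finite_ancestorsWithin (hR : ∀ b, {x | R x b}.Finite) (a : β) (n : ℕ) :
    (ancestorsWithin R a n).Finite := by
  induction n with
  | zero => exact Set.finite_singleton a
  | succ n ih => exact ih.union (ih.biUnion fun b _ => hR b)

theorem countable_setOf_reflTransGen (hR : ∀ b, {x | R x b}.Finite) (a : β) :
    {x | ReflTransGen R x a}.Countable := by
  refine (Set.countable_iUnion fun n => (finite_ancestorsWithin hR a n).countable).mono ?_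
  intro x hx
  induction hx using ReflTransGen.head_induction_on with
  | refl => exact Set.mem_iUnion.2 ⟨0, rfl⟩
  | head hxy _ ih =>
    obtain ⟨n, hn⟩ := Set.mem_iUnion.1 ih
    exact Set.mem_iUnion.2 ⟨n + 1, Or.inr (Set.mem_biUnion hn hxy)⟩

theorem reflTransGen_leastReachable (x : β) : ReflTransGen R x (leastReachable R x) :=
  WellOrderingRel.isWellOrder.wf.min_mem _ _

theorem not_wellOrderingRel_leastReachable_of_rel {a b : β} (hab : R a b) :
    ¬ WellOrderingRel (leastReachable R b) (leastReachable R a) :=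
  WellOrderingRel.isWellOrder.wf.not_lt_min _ ((reflTransGen_leastReachable b).head hab)

theorem exists_isWellOrder_finite_rel_lt (hR : ∀ a, {x | ReflTransGen R x a}.Countable) :
    ∃ r : β → β → Prop, IsWellOrder β r ∧ ∀ a, {b | R a b ∧ r b a}.Finite := by
  choose num hnum using fun c => Set.countable_iff_exists_injOn.mp (hR c)
  let key : β → β × ℕ := fun x => (leastReachable R x, num (leastReachable R x) x)
  have key_injective : key.Injective := by
    intro x y hxy
    simp only [key, Prod.mk.injEq] at hxy
    obtain ⟨hroot, hnum_eq⟩ := hxy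
    rw [← hroot] at hnum_eq
    exact hnum _ (reflTransGen_leastReachable x) (hroot ▸ reflTransGen_leastReachable y) hnum_eq
  let lex : β × ℕ → β × ℕ → Prop := Prod.Lex WellOrderingRel (· < ·)
  let emb : InvImage lex key ↪r lex := ⟨⟨key, key_injective⟩, Iff.rfl⟩
  refine ⟨_, emb.isWellOrder, fun a => ?_⟩
  set c := leastReachable R a
  have below_a : {b | R a b ∧ InvImage lex key b a} ⊆
      {b | ReflTransGen R b c ∧ num c b < num c a} := by
    rintro b ⟨hab, hba⟩
    rcases Prod.lex_iff.mp hba with hlt | ⟨hroot, hlt⟩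
    · exact absurd hlt (not_wellOrderingRel_leastReachable_of_rel hab)
    · have hroot : leastReachable R b = c := hroot
      simp only [key, hroot] at hlt
      exact ⟨hroot ▸ reflTransGen_leastReachable b, hlt⟩
  have finite_below : {b | ReflTransGen R b c ∧ num c b < num c a}.Finite :=
    Set.Finite.of_finite_image
      ((Set.finite_Iio (num c a)).subset (Set.image_subset_iff.mpr fun b hb => hb.2))
      ((hnum c).mono fun b hb => hb.1)
  exact finite_below.subset below_a

end Relation

/-- every finitary AF admits a well-ordering of its arguments in
which each argument attacks only finitely many earlier arguments. -/
theorem statement0 {α : Type u} (F : AF α) (hF : AF.Finitary F) :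
    ∃ r : ↥F.A → ↥F.A → Prop, IsWellOrder ↥F.A r ∧
      ∀ a : ↥F.A, {b : ↥F.A | F.R a.1 b.1 ∧ r b a}.Finite := by
  refine exists_isWellOrder_finite_rel_lt (countable_setOf_reflTransGen fun b => ?_)
  exact (hF b.1).preimage Subtype.val_injective.injOn
end

section
/- Every finitary argumentation framework F has at least one cf1.5-extension. -/
/-!
Basic notions of abstract argumentation frameworks, following
Andrews–San Mauro, "SCC-recursiveness in infinite argumentation".
-/

universe u

/-!
Number each strongly connected component (countable, as `F` is finitary) by `ℕ` and accept
arguments greedily: `v` is accepted iff it does not attack itself, no accepted argument of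
another component attacks it, and it conflicts with no accepted argument of its own component
that comes earlier in the numbering. Each such condition reads only finitely many arguments,
and a chain of these dependencies that returns to its starting component strictly decreases the
numbering, so the dependencies are acyclic. Finite parts of this system of equations are then
solved top-down, and compactness yields a global solution `S`. Inside a component `X`, the greedy
rule says precisely that `S ∩ X` is a maximal conflict-free subset of `X \ D_S(X)`.
-/

open Relation Set

section BooleanSystems

variable {α : Type*}

theorem exists_forall_not_rel_of_acyclic {r : α → α → Prop} (hr : ∀ a, ¬ TransGen r a a)
    {s : Set α} (hs : s.Finite) (hne : s.Nonempty) : ∃ w ∈ s, ∀ x ∈ s, ¬ r w x := by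
  have : Finite s := hs.to_subtype
  let ρ : s → s → Prop := fun x y => TransGen r y x
  have : IsTrans s ρ := ⟨fun _ _ _ h₁ h₂ => h₂.trans h₁⟩
  have : Std.Irrefl ρ := ⟨fun x => hr x⟩
  obtain ⟨⟨w, hw⟩, -, hmin⟩ :=
    (Finite.wellFounded_of_trans_of_irrefl ρ).has_min univ ⟨⟨_, hne.some_mem⟩, trivial⟩
  exact ⟨w, hw, fun x hx h => hmin ⟨x, hx⟩ trivial (TransGen.single h)⟩

/-- Compactness of `α → Bool`. -/
theorem exists_forall_of_forall_finset {ι : Type*} (C : ι → Set α → Prop) (N : ι → Set α)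
    (hN : ∀ i, (N i).Finite) (hC : ∀ i S S', (∀ u ∈ N i, u ∈ S ↔ u ∈ S') → C i S → C i S')
    (hfin : ∀ t : Finset ι, ∃ S, ∀ i ∈ t, C i S) : ∃ S, ∀ i, C i S := by
  let Z : ι → Set (α → Bool) := fun i => {σ | C i {u | σ u}}
  have hZ : ∀ i, IsClosed (Z i) := by
    intro i
    have : Finite (N i) := (hN i).to_subtype
    let r : (α → Bool) → N i → Bool := fun σ u => σ u
    have hpre : Z i = r ⁻¹' (r '' Z i) := by
      refine (subset_preimage_image _ _).antisymm ?_
      rintro σ ⟨τ, hτ, hστ⟩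
      exact hC i _ _ (fun u hu => by simp [← congrFun hστ ⟨u, hu⟩, r]) hτ
    rw [hpre]
    exact (isClosed_discrete _).preimage (continuous_pi fun u => continuous_apply _)
  obtain ⟨σ, -, hσ⟩ := isCompact_univ.inter_iInter_nonempty Z hZ fun t => by
    obtain ⟨S, hS⟩ := hfin t
    classical
    refine ⟨fun u => decide (u ∈ S), trivial, mem_iInter₂.2 fun i hi => ?_⟩
    simpa [Z] using hS i hi
  exact ⟨{u | σ u}, fun i => mem_iInter.1 hσ i⟩

variable (P : α → Set α → Prop) (T : α → Set α)
  (hP : ∀ v S S', (∀ u ∈ T v, u ∈ S ↔ u ∈ S') → (P v S ↔ P v S'))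
  (hT : ∀ v, ¬ TransGen (fun u v => u ∈ T v) v v)
include hP hT

theorem exists_fixpoint_on_finset (t : Finset α) : ∃ S, ∀ v ∈ t, v ∈ S ↔ P v S := by
  classical
  induction t using Finset.strongInduction with
  | _ t ih =>
  rcases t.eq_empty_or_nonempty with rfl | hne
  · exact ⟨∅, by simp⟩
  -- solve the system off a point `w` that no equation in `t` reads, then set `w` last
  obtain ⟨w, hwt, hw⟩ := exists_forall_not_rel_of_acyclic hT t.finite_toSet hne
  obtain ⟨S₀, hS₀⟩ := ih (t.erase w) (Finset.erase_ssubset hwt)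
  let S : Set α := {u | if u = w then P w S₀ else u ∈ S₀}
  have hS : ∀ v ∈ t, P v S ↔ P v S₀ := fun v hv => hP v _ _ fun u hu => by
    have : u ≠ w := by rintro rfl; exact hw v hv hu
    simp [S, this]
  refine ⟨S, fun v hv => ?_⟩
  rw [hS v hv]
  by_cases hvw : v = w
  · subst hvw; simp [S]
  · simpa [S, hvw] using hS₀ v (Finset.mem_erase.2 ⟨hvw, hv⟩)

theorem exists_fixpoint_of_acyclic (hTfin : ∀ v, (T v).Finite) : ∃ S, ∀ v, v ∈ S ↔ P v S :=
  exists_forall_of_forall_finset (fun v S => v ∈ S ↔ P v S) (fun v => insert v (T v))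
    (fun v => (hTfin v).insert v)
    (fun v S S' h hv => (h v (mem_insert v _)).symm.trans
      (hv.trans (hP v S S' fun u hu => h u (mem_insert_of_mem v hu))))
    (exists_fixpoint_on_finset P T hP hT)

end BooleanSystems

namespace AF

variable {α : Type u} {F : AF α}

theorem Reach.trans {a b c : α} (hab : Reach F a b) (hbc : Reach F b c) : Reach F a c :=
  ⟨hab.1, hbc.2.1, hab.2.2.trans hbc.2.2⟩

theorem mem_SCCof_self {a : α} (ha : a ∈ F.A) : a ∈ SCCof F a :=
  ⟨⟨ha, ha, .refl⟩, ⟨ha, ha, .refl⟩⟩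

theorem SCCof_eq_of_mem {a b : α} (h : b ∈ SCCof F a) : SCCof F b = SCCof F a := by
  ext c
  exact ⟨fun hc => ⟨h.1.trans hc.1, hc.2.trans h.2⟩, fun hc => ⟨h.2.trans hc.1, hc.2.trans h.1⟩⟩

theorem Finitary.countable_setOf_reflTransGen (hF : Finitary F) (v : α) :
    {u | ReflTransGen F.R u v}.Countable := by
  let step : Set α → Set α := fun s => s ∪ ⋃ b ∈ s, {a | F.R a b}
  have hfin : ∀ n, (step^[n] {v}).Finite := by
    intro n
    induction n with
    | zero => exact finite_singleton v
    | succ n ih =>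
      rw [Function.iterate_succ_apply']
      exact ih.union (ih.biUnion fun b _ => hF b)
  have hsub : {u | ReflTransGen F.R u v} ⊆ ⋃ n, step^[n] {v} := by
    intro u hu
    induction hu using ReflTransGen.head_induction_on with
    | refl => exact mem_iUnion.2 ⟨0, rfl⟩
    | head hab _ ih =>
      obtain ⟨n, hn⟩ := mem_iUnion.1 ih
      refine mem_iUnion.2 ⟨n + 1, ?_⟩
      rw [Function.iterate_succ_apply']
      exact Or.inr (mem_biUnion hn hab)
  exact (countable_iUnion fun n => (hfin n).countable).mono hsub

theorem Finitary.countable_SCCof (hF : Finitary F) (a : α) : (SCCof F a).Countable :=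
  (hF.countable_setOf_reflTransGen a).mono fun _ hb => hb.2.2.2

/-- Injective on `SCCof F v` whenever that component is countable, arbitrary otherwise. -/
noncomputable def sccIndex (F : AF α) (v : α) : ℕ :=
  Classical.epsilon (fun f : α → ℕ => InjOn f (SCCof F v)) v

theorem Finitary.injOn_sccIndex (hF : Finitary F) (a : α) : InjOn (sccIndex F) (SCCof F a) := by
  have hinj := Classical.epsilon_spec (countable_iff_exists_injOn.1 (hF.countable_SCCof a))
  intro u hu w hw h
  simp only [sccIndex, SCCof_eq_of_mem hu, SCCof_eq_of_mem hw] at h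
  exact hinj hu hw h

def blockers (F : AF α) (v : α) : Set α :=
  {a | F.R a v ∧ a ∉ SCCof F v} ∪
    {u | u ∈ SCCof F v ∧ (u, v) ∈ confl F ∧ sccIndex F u < sccIndex F v}

def GreedyAccepts (F : AF α) (S : Set α) (v : α) : Prop :=
  v ∈ F.A ∧ ¬ F.R v v ∧ ∀ u ∈ blockers F v, u ∉ S

theorem Finitary.finite_blockers (hF : Finitary F) (v : α) : (blockers F v).Finite := by
  refine (hF v).subset (fun a ha => ha.1) |>.union ?_
  refine Finite.of_finite_image ((finite_Iio (sccIndex F v)).subset ?_)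
    ((hF.injOn_sccIndex v).mono fun u hu => hu.1)
  rintro _ ⟨u, hu, rfl⟩
  exact hu.2.2

theorem reflTransGen_of_mem_blockers {u v : α} (h : u ∈ blockers F v) : ReflTransGen F.R u v := by
  rcases h with ⟨hR, -⟩ | ⟨hu, -, -⟩
  exacts [.single hR, hu.2.2.2]

theorem sccIndex_lt_of_mem_blockers {u v : α} (h : u ∈ blockers F v)
    (hvu : ReflTransGen F.R v u) : sccIndex F u < sccIndex F v := by
  rcases h with ⟨hR, hu⟩ | ⟨-, -, hlt⟩
  · obtain ⟨huA, hvA⟩ := F.attack_mem hR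
    exact absurd ⟨⟨hvA, huA, hvu⟩, ⟨huA, hvA, .single hR⟩⟩ hu
  · exact hlt

theorem sccIndex_lt_of_transGen_blockers {u v : α}
    (h : TransGen (fun u v => u ∈ blockers F v) u v) :
    ReflTransGen F.R v u → sccIndex F u < sccIndex F v := by
  induction h with
  | single h => exact sccIndex_lt_of_mem_blockers h
  | @tail w v huw hwv ih =>
    intro hvu
    have huw' : ReflTransGen F.R u w :=
      reflTransGen_closed (fun _ _ => reflTransGen_of_mem_blockers) _ _ huw.to_reflTransGen
    exact (ih ((reflTransGen_of_mem_blockers hwv).trans hvu)).trans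
      (sccIndex_lt_of_mem_blockers hwv (hvu.trans huw'))

theorem not_transGen_blockers (v : α) : ¬ TransGen (fun u v => u ∈ blockers F v) v v :=
  fun h => (sccIndex_lt_of_transGen_blockers h .refl).false

theorem Finitary.exists_greedy_fixpoint (hF : Finitary F) :
    ∃ S, ∀ v, v ∈ S ↔ GreedyAccepts F S v :=
  exists_fixpoint_of_acyclic (fun v S => GreedyAccepts F S v) (blockers F)
    (fun _ _ _ h => and_congr_right' <| and_congr_right' <|
      forall₂_congr fun u hu => not_congr (h u hu))
    not_transGen_blockers hF.finite_blockers

section GreedyFixpoint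

variable {S : Set α} (hS : ∀ v, v ∈ S ↔ GreedyAccepts F S v)
include hS

theorem conflictFree_of_greedy (hF : Finitary F) : ConflictFree F S := by
  refine ⟨fun v hv => ((hS v).1 hv).1, fun a haS b hbS hab => ?_⟩
  obtain ⟨-, -, hb⟩ := (hS b).1 hbS
  by_cases haX : a ∈ SCCof F b
  · obtain ⟨-, haa, ha⟩ := (hS a).1 haS
    have hbX : b ∈ SCCof F a := SCCof_eq_of_mem haX ▸ mem_SCCof_self (F.attack_mem hab).2
    rcases lt_trichotomy (sccIndex F a) (sccIndex F b) with hlt | heq | hgt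
    · exact hb a (Or.inr ⟨haX, Or.inl hab, hlt⟩) haS
    · exact haa (hF.injOn_sccIndex b haX (mem_SCCof_self (F.attack_mem hab).2) heq ▸ hab)
    · exact ha b (Or.inr ⟨hbX, Or.inr hab, hgt⟩) hbS
  · exact hb a (Or.inl ⟨hab, haX⟩) haS

theorem naive_of_greedy (hCF : ConflictFree F S) {X : Set α} (hX : IsSCC F X) :
    Naive (F.restrict (X \ Dset F S X)) (S ∩ X) := by
  obtain ⟨a, -, rfl⟩ := hX
  have hSX : S ∩ SCCof F a ⊆ F.A ∩ (SCCof F a \ Dset F S (SCCof F a)) := by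
    rintro v ⟨hvS, hvX⟩
    obtain ⟨hvA, -, hv⟩ := (hS v).1 hvS
    refine ⟨hvA, hvX, fun ⟨_, b, ⟨hbS, hbX⟩, hbv⟩ => hv b (Or.inl ⟨hbv, ?_⟩) hbS⟩
    rwa [SCCof_eq_of_mem hvX]
  refine ⟨⟨hSX, fun u hu v hv huv => hCF.2 u hu.1 v hv.1 huv.1⟩, fun T hT hST => ?_⟩
  refine hST.antisymm fun c hcT => ?_
  obtain ⟨hcA, hcX, hcD⟩ := hT.1 hcT
  refine ⟨(hS c).2 ⟨hcA, fun hcc => hT.2 c hcT c hcT ⟨hcc, ⟨hcX, hcD⟩, ⟨hcX, hcD⟩⟩, ?_⟩, hcX⟩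
  rintro u (⟨huc, huX⟩ | ⟨huX, huc, -⟩) huS
  · exact hcD ⟨hcX, u, ⟨huS, SCCof_eq_of_mem hcX ▸ huX⟩, huc⟩
  · rw [SCCof_eq_of_mem hcX] at huX
    have huT : u ∈ T := hST ⟨huS, huX⟩
    have huU := (hSX ⟨huS, huX⟩).2
    rcases huc with huc | hcu
    · exact hT.2 u huT c hcT ⟨huc, huU, hcX, hcD⟩
    · exact hT.2 c hcT u huT ⟨hcu, ⟨hcX, hcD⟩, huU⟩

end GreedyFixpoint

end AF

/-- every finitary AF has a cf1.5-extension. -/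
theorem statement1 {α : Type u} (F : AF α) (hF : AF.Finitary F) :
    ∃ S, AF.CF15 F S := by
  obtain ⟨S, hS⟩ := hF.exists_greedy_fixpoint
  have hCF := AF.conflictFree_of_greedy hS hF
  exact ⟨S, hCF, fun _ hX => AF.naive_of_greedy hS hCF hX⟩
end

section
/- Every finitary argumentation framework F has at least one stg1.5-extension. -/
/-!
Basic notions of abstract argumentation frameworks, following
Andrews–San Mauro, "SCC-recursiveness in infinite argumentation".
-/

universe u

/-! ### Auxiliary development for statement2 -/

namespace StgAux

open AF

variable {α : Type u}

/-- Master compactness lemma: a family of finitely-supported constraints on subsets of `α`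
which is finitely satisfiable is satisfiable. -/
theorem master {β : Type*} {ι : Type*} (P : ι → Set β → Prop) (supp : ι → Finset β)
    (hdep : ∀ i (S S' : Set β), (∀ a ∈ supp i, (a ∈ S ↔ a ∈ S')) → P i S → P i S')
    (hsat : ∀ J : Finset ι, ∃ S, ∀ i ∈ J, P i S) :
    ∃ S, ∀ i, P i S := by
  classical
  choose Sf hSf using hsat
  haveI : Nonempty (Finset ι) := ⟨∅⟩
  let 𝒰 : Ultrafilter (Finset ι) := Ultrafilter.of Filter.atTop
  have hle : (𝒰 : Filter (Finset ι)) ≤ Filter.atTop := Ultrafilter.of_le _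
  set S : Set β := {a | {J | a ∈ Sf J} ∈ 𝒰} with hSdef
  refine ⟨S, fun i => ?_⟩
  have h1 : {J : Finset ι | i ∈ J} ∈ 𝒰 := by
    apply hle
    refine Filter.mem_of_superset (Filter.mem_atTop ({i} : Finset ι)) ?_
    intro J hJ
    exact Finset.singleton_subset_iff.mp hJ
  have h2 : ∀ a : β, {J | (a ∈ Sf J ↔ a ∈ S)} ∈ 𝒰 := by
    intro a
    by_cases ha : {J | a ∈ Sf J} ∈ 𝒰
    · have haS : a ∈ S := ha
      refine Filter.mem_of_superset ha ?_
      intro J hJ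
      simp only [Set.mem_setOf_eq] at hJ ⊢
      exact ⟨fun _ => haS, fun _ => hJ⟩
    · have haS : a ∉ S := ha
      have hc : {J | a ∈ Sf J}ᶜ ∈ 𝒰 := (Ultrafilter.compl_mem_iff_notMem).mpr ha
      refine Filter.mem_of_superset hc ?_
      intro J hJ
      simp only [Set.mem_compl_iff, Set.mem_setOf_eq] at hJ ⊢
      exact ⟨fun h => absurd h hJ, fun h => absurd h haS⟩
  have h3 : {J : Finset ι | ∀ a ∈ supp i, (a ∈ Sf J ↔ a ∈ S)} ∈ 𝒰 := by
    have h4 : (⋂ a ∈ (supp i : Finset β), {J : Finset ι | (a ∈ Sf J ↔ a ∈ S)}) ∈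
        (𝒰 : Filter (Finset ι)) :=
      (Filter.biInter_finset_mem (supp i)).mpr (fun a _ => h2 a)
    refine Filter.mem_of_superset h4 ?_
    intro J hJ
    simp only [Set.mem_iInter, Set.mem_setOf_eq] at hJ ⊢
    exact hJ
  obtain ⟨J, hJ⟩ := Filter.nonempty_of_mem (Filter.inter_mem h1 h3)
  exact hdep i (Sf J) S hJ.2 (hSf J i hJ.1)

/-! ### SCC basics -/

lemma reach_refl (F : AF α) {a : α} (ha : a ∈ F.A) : Reach F a a :=
  ⟨ha, ha, Relation.ReflTransGen.refl⟩

lemma reach_trans (F : AF α) {a b c : α} (h1 : Reach F a b) (h2 : Reach F b c) :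
    Reach F a c :=
  ⟨h1.1, h2.2.1, h1.2.2.trans h2.2.2⟩

lemma reach_of_R (F : AF α) {a b : α} (h : F.R a b) : Reach F a b :=
  ⟨(F.attack_mem h).1, (F.attack_mem h).2, Relation.ReflTransGen.single h⟩

lemma mem_scc_self (F : AF α) {a : α} (ha : a ∈ F.A) : a ∈ SCCof F a :=
  ⟨reach_refl F ha, reach_refl F ha⟩

lemma scc_subset_A (F : AF α) (a : α) : SCCof F a ⊆ F.A := fun _ hb => hb.1.2.1

lemma scc_eq_of_mem (F : AF α) {a b : α} (hb : b ∈ SCCof F a) : SCCof F b = SCCof F a := by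
  obtain ⟨hab, hba⟩ := hb
  ext c
  exact ⟨fun hc => ⟨reach_trans F hab hc.1, reach_trans F hc.2 hba⟩,
    fun hc => ⟨reach_trans F hba hc.1, reach_trans F hc.2 hab⟩⟩

lemma scc_eq_of_mem' (F : AF α) {X : Set α} (hX : IsSCC F X) {b : α} (hb : b ∈ X) :
    SCCof F b = X := by
  obtain ⟨a, _, rfl⟩ := hX
  exact scc_eq_of_mem F hb

lemma scc_disjoint (F : AF α) {X Y : Set α} (hX : IsSCC F X) (hY : IsSCC F Y)
    (hne : X ≠ Y) {x : α} (hx : x ∈ X) : x ∉ Y := fun hxY =>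
  hne ((scc_eq_of_mem' F hX hx).symm.trans (scc_eq_of_mem' F hY hxY))

/-- reach within an SCC -/
lemma reach_of_mem_scc (F : AF α) {X : Set α} (hX : IsSCC F X) {b c : α}
    (hb : b ∈ X) (hc : c ∈ X) : Reach F b c := by
  obtain ⟨a, _, rfl⟩ := hX
  exact reach_trans F hb.2 hc.1

/-- the set of iterated attackers of `a` -/
def ancSet (F : AF α) (a : α) : ℕ → Set α
  | 0 => {a}
  | n + 1 => ancSet F a n ∪ ⋃ c ∈ ancSet F a n, {y | F.R y c}

lemma ancSet_finite (F : AF α) (hF : Finitary F) (a : α) : ∀ n, (ancSet F a n).Finite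
  | 0 => Set.finite_singleton a
  | n + 1 => (ancSet_finite F hF a n).union
      ((ancSet_finite F hF a n).biUnion (fun c _ => hF c))

lemma mem_ancSet_of_rtg (F : AF α) {a b : α} (h : Relation.ReflTransGen F.R b a) :
    ∃ n, b ∈ ancSet F a n := by
  induction h using Relation.ReflTransGen.head_induction_on with
  | refl => exact ⟨0, rfl⟩
  | head hr _ ih =>
    obtain ⟨n, hn⟩ := ih
    exact ⟨n + 1, Or.inr (Set.mem_biUnion hn hr)⟩

lemma scc_countable (F : AF α) (hF : Finitary F) (a : α) : (SCCof F a).Countable := by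
  have h1 : SCCof F a ⊆ ⋃ n, ancSet F a n := by
    intro b hb
    obtain ⟨n, hn⟩ := mem_ancSet_of_rtg F hb.2.2.2
    exact Set.mem_iUnion.mpr ⟨n, hn⟩
  exact (Set.countable_iUnion (fun n => (ancSet_finite F hF a n).countable)).mono h1

end StgAux

namespace StgAux

open AF

variable {α : Type u}

section Enum

set_option linter.unusedSectionVars false

attribute [local instance] Classical.propDecidable

variable [Nonempty α]

/-- A canonical enumeration covering a countable set. -/
noncomputable def enumOf (U : Set α) : ℕ → α :=
  if h : ∃ f : ℕ → α, U ⊆ Set.range f then Classical.choose h else fun _ => Classical.arbitrary α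

lemma enumOf_spec {U : Set α} (hU : U.Countable) : U ⊆ Set.range (enumOf U) := by
  rw [Set.countable_iff_exists_subset_range] at hU
  rw [enumOf, dif_pos hU]
  exact Classical.choose_spec hU

/-- The restricted framework `F ↾ (U \ D)`. -/
def Fres (F : AF α) (U D : Set α) : AF α := F.restrict (U \ D)

lemma Fres_A (F : AF α) (U D : Set α) : (Fres F U D).A = F.A ∩ (U \ D) := rfl

lemma Fres_R (F : AF α) (U D : Set α) (a b : α) :
    (Fres F U D).R a b ↔ F.R a b ∧ a ∈ U \ D ∧ b ∈ U \ D := Iff.rfl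

/-- `n` is the first index at which `enumOf U n` (a member of `U`) is enumerated. -/
def IsFresh (U : Set α) (n : ℕ) : Prop :=
  enumOf U n ∈ U ∧ ∀ m < n, enumOf U m ≠ enumOf U n

/-- A finite pattern `s` of covered points among the first `n` enumerated elements of `U`
is consistent (for deletion set `D`). -/
def Consistent (F : AF α) (U D : Set α) (n : ℕ) (s : Set α) : Prop :=
  ∃ T : Set α, ConflictFree (Fres F U D) T ∧
    ∀ m < n, enumOf U m ∈ U → (enumOf U m ∈ rng (Fres F U D) T ↔ enumOf U m ∈ s)

/-- The greedy approximations to the canonical maximal range. -/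
noncomputable def sarr (F : AF α) (U D : Set α) : ℕ → Set α
  | 0 => (∅ : Set α)
  | n + 1 =>
    sarr F U D n ∪
      {x | x = enumOf U n ∧ IsFresh U n ∧
        Consistent F U D (n + 1) (sarr F U D n ∪ {enumOf U n})}

/-- The canonical maximal range of `F ↾ (U \ D)`. -/
noncomputable def Mx (F : AF α) (U D : Set α) : Set α := ⋃ n, sarr F U D n

lemma sarr_succ (F : AF α) (U D : Set α) (n : ℕ) :
    sarr F U D (n + 1) = sarr F U D n ∪
      {x | x = enumOf U n ∧ IsFresh U n ∧
        Consistent F U D (n + 1) (sarr F U D n ∪ {enumOf U n})} := rfl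

lemma sarr_mono (F : AF α) (U D : Set α) : Monotone (sarr F U D) := by
  apply monotone_nat_of_le_succ
  intro n
  rw [sarr_succ]
  exact Set.subset_union_left

lemma mem_sarr (F : AF α) (U D : Set α) {x : α} : ∀ {n : ℕ}, x ∈ sarr F U D n →
    ∃ m < n, x = enumOf U m ∧ IsFresh U m ∧
      Consistent F U D (m + 1) (sarr F U D m ∪ {enumOf U m}) := by
  intro n
  induction n with
  | zero => intro h; exact absurd h (Set.notMem_empty x)
  | succ n ih =>
    intro h
    rcases h with h | h
    · obtain ⟨m, hm, h⟩ := ih h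
      exact ⟨m, Nat.lt_succ_of_lt hm, h⟩
    · exact ⟨n, Nat.lt_succ_self n, h.1, h.2.1, h.2.2⟩

lemma sarr_subset_U (F : AF α) (U D : Set α) (n : ℕ) : sarr F U D n ⊆ U := by
  intro x hx
  obtain ⟨m, _, rfl, hf, _⟩ := mem_sarr F U D hx
  exact hf.1

lemma sarr_subset_Mx (F : AF α) (U D : Set α) (n : ℕ) : sarr F U D n ⊆ Mx F U D :=
  Set.subset_iUnion (sarr F U D) n

lemma Mx_subset_U (F : AF α) (U D : Set α) : Mx F U D ⊆ U := by
  intro x hx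
  obtain ⟨n, hn⟩ := Set.mem_iUnion.mp hx
  exact sarr_subset_U F U D n hn

lemma mem_Mx (F : AF α) (U D : Set α) {x : α} (h : x ∈ Mx F U D) :
    ∃ m, x = enumOf U m ∧ IsFresh U m ∧ x ∈ sarr F U D (m + 1) := by
  obtain ⟨n, hn⟩ := Set.mem_iUnion.mp h
  obtain ⟨m, _, rfl, hf, hc⟩ := mem_sarr F U D hn
  exact ⟨m, rfl, hf, Or.inr ⟨rfl, hf, hc⟩⟩

/-- The first enumeration index of `x`. -/
noncomputable def fIdx (U : Set α) (x : α) : ℕ :=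
  if h : ∃ n, enumOf U n = x then Nat.find h else 0

lemma fIdx_spec {U : Set α} (hU : U ⊆ Set.range (enumOf U)) {x : α} (hx : x ∈ U) :
    enumOf U (fIdx U x) = x ∧ IsFresh U (fIdx U x) ∧ ∀ m, enumOf U m = x → fIdx U x ≤ m := by
  have h : ∃ n, enumOf U n = x := by
    obtain ⟨n, hn⟩ := hU hx
    exact ⟨n, hn⟩
  rw [fIdx, dif_pos h]
  have h1 : enumOf U (Nat.find h) = x := Nat.find_spec h
  refine ⟨h1, ⟨by rw [h1]; exact hx, fun m hm hme => ?_⟩, fun m hm => Nat.find_min' h hm⟩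
  exact Nat.find_min h hm (hme.trans h1)

lemma fresh_unique {U : Set α} {m n : ℕ} (hm : IsFresh U m) (hn : IsFresh U n)
    (h : enumOf U m = enumOf U n) : m = n := by
  rcases lt_trichotomy m n with hlt | he | hlt
  · exact absurd h (hn.2 m hlt)
  · exact he
  · exact absurd h.symm (hm.2 n hlt)

lemma mem_sarr_iff_Mx (F : AF α) {U : Set α} (hU : U ⊆ Set.range (enumOf U)) (D : Set α)
    {x : α} (hx : x ∈ U) {n : ℕ} (hn : fIdx U x < n) :
    x ∈ sarr F U D n ↔ x ∈ Mx F U D := by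
  constructor
  · intro h; exact sarr_subset_Mx F U D n h
  · intro h
    obtain ⟨m, hme, hmf, hms⟩ := mem_Mx F U D h
    obtain ⟨he, hf, _⟩ := fIdx_spec hU hx
    have : m = fIdx U x := fresh_unique hmf hf (hme ▸ he.symm ▸ rfl)
    subst this
    exact sarr_mono F U D (Nat.succ_le_of_lt hn) hms

lemma conflictFree_empty (G : AF α) : ConflictFree G (∅ : Set α) :=
  ⟨Set.empty_subset _, fun a ha => absurd ha (Set.notMem_empty a)⟩

lemma consistent_invariant (F : AF α) (U D : Set α) :
    ∀ n, Consistent F U D n (sarr F U D n) := by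
  intro n
  induction n with
  | zero => exact ⟨∅, conflictFree_empty _, fun m hm => absurd hm (Nat.not_lt_zero m)⟩
  | succ n ih =>
    obtain ⟨T, hT, hpat⟩ := ih
    by_cases hfresh : IsFresh U n
    · by_cases hcons : Consistent F U D (n + 1) (sarr F U D n ∪ {enumOf U n})
      · have hs : sarr F U D (n + 1) = sarr F U D n ∪ {enumOf U n} := by
          rw [sarr_succ]
          congr 1
          ext x
          simp only [Set.mem_setOf_eq, Set.mem_singleton_iff]
          exact ⟨fun h => h.1, fun h => ⟨h, hfresh, hcons⟩⟩
        rw [hs]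
        exact hcons
      · have hs : sarr F U D (n + 1) = sarr F U D n := by
          rw [sarr_succ]
          have : {x | x = enumOf U n ∧ IsFresh U n ∧
              Consistent F U D (n + 1) (sarr F U D n ∪ {enumOf U n})} = (∅ : Set α) := by
            ext x
            simp only [Set.mem_setOf_eq, Set.mem_empty_iff_false, iff_false]
            rintro ⟨_, _, hc⟩
            exact hcons hc
          rw [this, Set.union_empty]
        rw [hs]
        have hen_notin : enumOf U n ∉ sarr F U D n := by
          intro hmem
          obtain ⟨m, hm, hme, _, _⟩ := mem_sarr F U D hmem
          exact hfresh.2 m hm hme.symm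
        have hne : enumOf U n ∉ rng (Fres F U D) T := by
          intro hmem
          apply hcons
          refine ⟨T, hT, fun m hm hmU => ?_⟩
          rcases Nat.lt_succ_iff_lt_or_eq.mp hm with hlt | heq
          · rw [Set.mem_union]
            rw [hpat m hlt hmU]
            simp only [Set.mem_singleton_iff]
            constructor
            · intro h; exact Or.inl h
            · rintro (h | h)
              · exact h
              · exact absurd h (hfresh.2 m hlt)
          · subst heq
            exact ⟨fun _ => Set.mem_union_right _ rfl, fun _ => hmem⟩
        refine ⟨T, hT, fun m hm hmU => ?_⟩
        rcases Nat.lt_succ_iff_lt_or_eq.mp hm with hlt | heq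
        · exact hpat m hlt hmU
        · subst heq
          exact ⟨fun h => absurd h hne, fun h => absurd h hen_notin⟩
    · have hs : sarr F U D (n + 1) = sarr F U D n := by
        rw [sarr_succ]
        have : {x | x = enumOf U n ∧ IsFresh U n ∧
            Consistent F U D (n + 1) (sarr F U D n ∪ {enumOf U n})} = (∅ : Set α) := by
          ext x
          simp only [Set.mem_setOf_eq, Set.mem_empty_iff_false, iff_false]
          rintro ⟨_, hf, _⟩
          exact hfresh hf
        rw [this, Set.union_empty]
      rw [hs]
      refine ⟨T, hT, fun m hm hmU => ?_⟩
      rcases Nat.lt_succ_iff_lt_or_eq.mp hm with hlt | heq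
      · exact hpat m hlt hmU
      · subst heq
        have : ∃ m₀ < m, enumOf U m₀ = enumOf U m := by
          by_contra hno
          push_neg at hno
          exact hfresh ⟨hmU, fun k hk => hno k hk⟩
        obtain ⟨m₀, hm₀, he₀⟩ := this
        rw [← he₀]
        exact hpat m₀ hm₀ (he₀ ▸ hmU)

end Enum

end StgAux

namespace StgAux

open AF

variable {α : Type u}

section Enum2

set_option linter.unusedSectionVars false

attribute [local instance] Classical.propDecidable

variable [Nonempty α]

lemma rng_subset_U (F : AF α) (U D : Set α) {T : Set α}
    (hT : ConflictFree (Fres F U D) T) : rng (Fres F U D) T ⊆ U := by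
  rintro x (hx | ⟨y, _, hR⟩)
  · exact (hT.1 hx).2.1
  · exact hR.2.2.1

lemma mem_rng_congr (G : AF α) {T T' : Set α} {x : α}
    (hx : x ∈ T ↔ x ∈ T') (hatt : ∀ y, G.R y x → (y ∈ T ↔ y ∈ T')) :
    x ∈ rng G T ↔ x ∈ rng G T' := by
  constructor
  · rintro (h | ⟨y, hy, hR⟩)
    · exact Or.inl (hx.mp h)
    · exact Or.inr ⟨y, (hatt y hR).mp hy, hR⟩
  · rintro (h | ⟨y, hy, hR⟩)
    · exact Or.inl (hx.mpr h)
    · exact Or.inr ⟨y, (hatt y hR).mpr hy, hR⟩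

/-- Key maximality property of `Mx`: no conflict-free set of the restricted framework
has a range strictly above `Mx`. -/
lemma Mx_maximal (F : AF α) {U : Set α} (hU : U ⊆ Set.range (enumOf U)) (D : Set α)
    {T : Set α} (hT : ConflictFree (Fres F U D) T) :
    ¬ (Mx F U D ⊂ rng (Fres F U D) T) := by
  intro hss
  rw [Set.ssubset_def] at hss
  obtain ⟨hsub, hns⟩ := hss
  obtain ⟨x₀, hx₀r, hx₀M⟩ := Set.not_subset.mp hns
  have hx₀U : x₀ ∈ U := rng_subset_U F U D hT hx₀r
  have hbad : ∃ n, IsFresh U n ∧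
      ¬((enumOf U n ∈ rng (Fres F U D) T) ↔ (enumOf U n ∈ Mx F U D)) := by
    obtain ⟨he, hf, _⟩ := fIdx_spec hU hx₀U
    refine ⟨fIdx U x₀, hf, ?_⟩
    rw [he]
    intro hiff
    exact hx₀M (hiff.mp hx₀r)
  set n₀ := Nat.find hbad with hn₀def
  have hn₀ := Nat.find_spec hbad
  have hmin : ∀ k < n₀, ¬(IsFresh U k ∧
      ¬((enumOf U k ∈ rng (Fres F U D) T) ↔ (enumOf U k ∈ Mx F U D))) :=
    fun k hk => Nat.find_min hbad hk
  have h1 : enumOf U n₀ ∈ rng (Fres F U D) T ∧ enumOf U n₀ ∉ Mx F U D := by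
    by_cases hm : enumOf U n₀ ∈ Mx F U D
    · exact absurd ⟨fun _ => hm, fun _ => hsub hm⟩ hn₀.2
    · by_cases hr : enumOf U n₀ ∈ rng (Fres F U D) T
      · exact ⟨hr, hm⟩
      · exact absurd ⟨fun h => absurd h hr, fun h => absurd h hm⟩ hn₀.2
  have hcons : Consistent F U D (n₀ + 1) (sarr F U D n₀ ∪ {enumOf U n₀}) := by
    refine ⟨T, hT, fun m hm hmU => ?_⟩
    rcases Nat.lt_succ_iff_lt_or_eq.mp hm with hlt | heq
    · obtain ⟨he, hf, hle⟩ := fIdx_spec hU hmU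
      have hi_lt : fIdx U (enumOf U m) < n₀ := lt_of_le_of_lt (hle m rfl) hlt
      have key1 : enumOf U m ∈ rng (Fres F U D) T ↔ enumOf U m ∈ Mx F U D := by
        have := hmin _ hi_lt
        rw [not_and, not_not] at this
        have h2 := this hf
        rwa [he] at h2
      have key2 : enumOf U m ∈ sarr F U D n₀ ↔ enumOf U m ∈ Mx F U D :=
        mem_sarr_iff_Mx F hU D hmU (lt_of_le_of_lt (hle m rfl) hlt)
      rw [Set.mem_union, key1, ← key2]
      simp only [Set.mem_singleton_iff]
      constructor
      · exact fun h => Or.inl h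
      · rintro (h | h)
        · exact h
        · exact absurd h (hn₀.1.2 m hlt)
    · subst heq
      exact ⟨fun _ => Set.mem_union_right _ rfl, fun _ => h1.1⟩
  have : enumOf U n₀ ∈ sarr F U D (n₀ + 1) := Or.inr ⟨rfl, hn₀.1, hcons⟩
  exact h1.2 (sarr_subset_Mx F U D (n₀ + 1) this)

/-- Key realizability property: `Mx` is the range of some conflict-free set. -/
lemma Mx_realizable (F : AF α) (hF : Finitary F) {U : Set α}
    (hU : U ⊆ Set.range (enumOf U)) (D : Set α) :
    ∃ T, ConflictFree (Fres F U D) T ∧ Mx F U D ⊆ rng (Fres F U D) T := by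
  classical
  let P : (ℕ ⊕ ((α × α) ⊕ α)) → Set α → Prop := fun i T => match i with
    | .inl n => ∀ m < n, enumOf U m ∈ U →
        (enumOf U m ∈ rng (Fres F U D) T ↔ enumOf U m ∈ Mx F U D)
    | .inr (.inl (u, v)) => (Fres F U D).R u v → u ∈ T → v ∈ T → False
    | .inr (.inr u) => u ∈ T → u ∈ (Fres F U D).A
  let supp : (ℕ ⊕ ((α × α) ⊕ α)) → Finset α := fun i => match i with
    | .inl n => (Finset.range n).biUnion
        (fun m => insert (enumOf U m) (hF (enumOf U m)).toFinset)
    | .inr (.inl (u, v)) => {u, v}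
    | .inr (.inr u) => {u}
  have key : ∃ T, ∀ i, P i T := by
    refine master P supp ?_ ?_
    · rintro (n | (⟨u, v⟩ | u)) S S' hag h
      · intro m hm hmU
        have hsupp : ∀ y ∈ insert (enumOf U m) (hF (enumOf U m)).toFinset,
            (y ∈ S ↔ y ∈ S') := by
          intro y hy
          refine hag y ?_
          exact Finset.mem_biUnion.mpr ⟨m, Finset.mem_range.mpr hm, hy⟩
        have hcongr : enumOf U m ∈ rng (Fres F U D) S ↔ enumOf U m ∈ rng (Fres F U D) S' := by
          refine mem_rng_congr _ (hsupp _ (Finset.mem_insert_self _ _)) ?_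
          intro y hR
          refine hsupp y (Finset.mem_insert_of_mem ?_)
          exact (hF (enumOf U m)).mem_toFinset.mpr hR.1
        rw [← hcongr]
        exact h m hm hmU
      · intro hR hu hv
        have hu' := (hag u (by simp [supp])).mpr hu
        have hv' := (hag v (by simp [supp])).mpr hv
        exact h hR hu' hv'
      · intro hu
        exact h ((hag u (by simp [supp])).mpr hu)
    · intro J
      set N := (J.sup (fun i => match i with | .inl n => n | _ => 0)) + 1 with hN
      obtain ⟨T, hT, hpat⟩ := consistent_invariant F U D N
      refine ⟨T, fun i hi => ?_⟩
      match i with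
      | .inl n =>
        intro m hm hmU
        have hnN : n ≤ N - 1 := Finset.le_sup (f := fun i => match i with | .inl n => n | _ => 0) hi
        have hmN : m < N := by omega
        have hp := hpat m hmN hmU
        rw [hp]
        refine mem_sarr_iff_Mx F hU D hmU ?_
        have := ((fIdx_spec hU hmU).2.2) m rfl
        omega
      | .inr (.inl (u, v)) =>
        exact fun hR hu hv => hT.2 u hu v hv hR
      | .inr (.inr u) =>
        exact fun hu => hT.1 hu
  obtain ⟨T, hP⟩ := key
  refine ⟨T, ⟨fun u hu => hP (.inr (.inr u)) hu,
    fun a ha b hb hR => hP (.inr (.inl (a, b))) hR ha hb⟩, ?_⟩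
  intro x hx
  have hxU : x ∈ U := Mx_subset_U F U D hx
  obtain ⟨he, hf, _⟩ := fIdx_spec hU hxU
  have h2 := hP (.inl (fIdx U x + 1)) (fIdx U x) (Nat.lt_succ_self _) (by rw [he]; exact hxU)
  rw [he] at h2
  exact h2.mpr hx

/-- The finite support set controlling the first `n` greedy decisions. -/
def Vn (F : AF α) (U : Set α) (n : ℕ) : Set α :=
  ⋃ m ∈ Finset.range n, insert (enumOf U m) {y | F.R y (enumOf U m)}

lemma Vn_finite (F : AF α) (hF : Finitary F) (U : Set α) (n : ℕ) : (Vn F U n).Finite :=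
  Set.Finite.biUnion (Finset.range n).finite_toSet
    (fun m _ => (hF (enumOf U m)).insert (enumOf U m))

lemma mem_Vn_self (F : AF α) (U : Set α) {m n : ℕ} (h : m < n) :
    enumOf U m ∈ Vn F U n :=
  Set.mem_biUnion (Finset.mem_range.mpr h) (Set.mem_insert _ _)

lemma mem_Vn_att (F : AF α) (U : Set α) {m n : ℕ} (h : m < n) {y : α}
    (hy : F.R y (enumOf U m)) : y ∈ Vn F U n :=
  Set.mem_biUnion (Finset.mem_range.mpr h) (Set.mem_insert_of_mem _ hy)

lemma Vn_mono (F : AF α) (U : Set α) {m n : ℕ} (h : m ≤ n) : Vn F U m ⊆ Vn F U n := by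
  refine Set.biUnion_subset_biUnion_left ?_
  intro k hk
  have hk' : k < m := Finset.mem_range.mp (Finset.mem_coe.mp hk)
  exact Finset.mem_coe.mpr (Finset.mem_range.mpr (lt_of_lt_of_le hk' h))

lemma consistent_transfer (F : AF α) (U : Set α) {D D' : Set α} {n : ℕ}
    (hag : ∀ v ∈ Vn F U n, (v ∈ D ↔ v ∈ D')) {s : Set α}
    (h : Consistent F U D n s) : Consistent F U D' n s := by
  obtain ⟨T, hT, hpat⟩ := h
  have hTsub : T ⊆ F.A ∩ (U \ D) := hT.1
  refine ⟨{y | y ∈ T ∧ y ∈ Vn F U n ∧ y ∉ D'}, ⟨?_, ?_⟩, ?_⟩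
  · rintro y ⟨hyT, _, hyD'⟩
    exact ⟨(hTsub hyT).1, (hTsub hyT).2.1, hyD'⟩
  · rintro a ⟨haT, _, _⟩ b ⟨hbT, _, _⟩ hR
    refine hT.2 a haT b hbT ?_
    exact ⟨hR.1, ⟨(hTsub haT).2.1, (hTsub haT).2.2⟩, ⟨(hTsub hbT).2.1, (hTsub hbT).2.2⟩⟩
  · intro m hm hmU
    rw [← hpat m hm hmU]
    have hxV : enumOf U m ∈ Vn F U n := mem_Vn_self F U hm
    constructor
    · rintro (⟨hxT, _, _⟩ | ⟨y, ⟨hyT, _, _⟩, hR⟩)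
      · exact Or.inl hxT
      · refine Or.inr ⟨y, hyT, hR.1, (hTsub hyT).2, ?_⟩
        have hxU' : enumOf U m ∈ U := hmU
        have : enumOf U m ∉ D' := hR.2.2.2
        exact ⟨hxU', fun hD => this ((hag _ hxV).mp hD)⟩
    · rintro (hxT | ⟨y, hyT, hR⟩)
      · refine Or.inl ⟨hxT, hxV, ?_⟩
        exact fun hD' => (hTsub hxT).2.2 ((hag _ hxV).mpr hD')
      · have hyV : y ∈ Vn F U n := mem_Vn_att F U hm hR.1
        refine Or.inr ⟨y, ⟨hyT, hyV, fun hD' => (hTsub hyT).2.2 ((hag _ hyV).mpr hD')⟩,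
          hR.1, ⟨(hTsub hyT).2.1, fun hD' => (hTsub hyT).2.2 ((hag _ hyV).mpr hD')⟩, ?_⟩
        exact ⟨hmU, fun hD' => hR.2.2.2 ((hag _ hxV).mpr hD')⟩
  
lemma consistent_congr (F : AF α) (U : Set α) {D D' : Set α} {n : ℕ}
    (hag : ∀ v ∈ Vn F U n, (v ∈ D ↔ v ∈ D')) (s : Set α) :
    Consistent F U D n s ↔ Consistent F U D' n s :=
  ⟨consistent_transfer F U hag, consistent_transfer F U (fun v hv => (hag v hv).symm)⟩

lemma sarr_congr (F : AF α) (U : Set α) {D D' : Set α} :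
    ∀ {n : ℕ}, (∀ v ∈ Vn F U n, (v ∈ D ↔ v ∈ D')) → sarr F U D n = sarr F U D' n := by
  intro n
  induction n with
  | zero => intro _; rfl
  | succ n ih =>
    intro hag
    have hIH : sarr F U D n = sarr F U D' n :=
      ih (fun v hv => hag v (Vn_mono F U (Nat.le_succ n) hv))
    rw [sarr_succ, sarr_succ, hIH]
    congr 1
    ext x
    simp only [Set.mem_setOf_eq]
    constructor
    · rintro ⟨h1, h2, h3⟩
      exact ⟨h1, h2, (consistent_congr F U hag _).mp h3⟩
    · rintro ⟨h1, h2, h3⟩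
      exact ⟨h1, h2, (consistent_congr F U hag _).mpr h3⟩

lemma Mx_congr (F : AF α) {U : Set α} (hU : U ⊆ Set.range (enumOf U)) {D D' : Set α}
    {x : α} (hx : x ∈ U) (hag : ∀ v ∈ Vn F U (fIdx U x + 1), (v ∈ D ↔ v ∈ D')) :
    (x ∈ Mx F U D ↔ x ∈ Mx F U D') := by
  rw [← mem_sarr_iff_Mx F hU D hx (Nat.lt_succ_self _),
    ← mem_sarr_iff_Mx F hU D' hx (Nat.lt_succ_self _), sarr_congr F U hag]

end Enum2

end StgAux

namespace StgAux

open AF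

variable {α : Type u}

lemma finset_exists_min {β : Type*} (r : β → β → Prop) (s : Finset β) :
    s.Nonempty →
    (∀ x ∈ s, ∀ y ∈ s, ∀ z ∈ s, r x y → r y z → r x z) →
    (∀ x ∈ s, ¬ r x x) →
    ∃ y ∈ s, ∀ x ∈ s, ¬ r x y := by
  classical
  induction s using Finset.strongInductionOn with
  | _ s ih =>
    intro hne htrans hirr
    obtain ⟨y₀, hy₀⟩ := hne
    by_cases h : ∀ x ∈ s, ¬ r x y₀
    · exact ⟨y₀, hy₀, h⟩
    · push_neg at h
      obtain ⟨x₀, hx₀s, hx₀r⟩ := h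
      set s' := s.filter (fun x => r x y₀) with hs'
      have hsub : s' ⊆ s := Finset.filter_subset _ _
      have hss : s' ⊂ s := by
        refine Finset.ssubset_iff_of_subset hsub |>.mpr ?_
        exact ⟨y₀, hy₀, fun hmem => hirr y₀ hy₀ (Finset.mem_filter.mp hmem).2⟩
      have hx₀s' : x₀ ∈ s' := Finset.mem_filter.mpr ⟨hx₀s, hx₀r⟩
      obtain ⟨y, hy, hmin⟩ := ih s' hss ⟨x₀, hx₀s'⟩
        (fun x hx yy hyy z hz => htrans x (hsub hx) yy (hsub hyy) z (hsub hz))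
        (fun x hx => hirr x (hsub hx))
      refine ⟨y, hsub hy, fun x hx hrxy => ?_⟩
      have hry : r y y₀ := (Finset.mem_filter.mp hy).2
      have hxy₀ : r x y₀ := htrans x hx y (hsub hy) y₀ hy₀ hrxy hry
      exact hmin x (Finset.mem_filter.mpr ⟨hx, hxy₀⟩) hrxy

/-- `X` lies strictly below `Y` in the order of strongly connected components. -/
def sccBelow (F : AF α) (X Y : Set α) : Prop :=
  X ≠ Y ∧ ∃ a b, a ∈ Y ∧ b ∈ X ∧ Reach F a b

lemma sccBelow_irrefl (F : AF α) (X : Set α) : ¬ sccBelow F X X := fun h => h.1 rfl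

lemma sccBelow_trans (F : AF α) {X Y Z : Set α} (hX : IsSCC F X) (hY : IsSCC F Y)
    (hZ : IsSCC F Z) (h1 : sccBelow F X Y) (h2 : sccBelow F Y Z) : sccBelow F X Z := by
  obtain ⟨hXY, a, b, haY, hbX, hab⟩ := h1
  obtain ⟨hYZ, c, d, hcZ, hdY, hcd⟩ := h2
  have hda : Reach F d a := reach_of_mem_scc F hY hdY haY
  have hcb : Reach F c b := reach_trans F (reach_trans F hcd hda) hab
  refine ⟨?_, c, b, hcZ, hbX, hcb⟩
  intro hXZ
  subst hXZ
  have hbc : Reach F b c := reach_of_mem_scc F hX hbX hcZ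
  have hba : Reach F b a := reach_trans F (reach_trans F hbc hcd) hda
  have hbmem : b ∈ SCCof F a := ⟨hab, hba⟩
  have e1 : SCCof F b = X := scc_eq_of_mem' F hX hbX
  have e2 : SCCof F a = Y := scc_eq_of_mem' F hY haY
  exact hXY ((e1.symm.trans (scc_eq_of_mem F hbmem)).trans e2)

section FinSol

variable [Nonempty α]

set_option linter.unusedSectionVars false

attribute [local instance] Classical.propDecidable

/-- A simultaneous solution of the target-coverage problems on a finite family of SCCs. -/
lemma finSol (F : AF α) (hF : Finitary F) (𝒢 : Finset (Set α)) :
    (∀ X ∈ 𝒢, IsSCC F X) →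
    ∃ S : Set α, S ⊆ F.A ∧ (∀ x ∈ S, ∃ X ∈ 𝒢, x ∈ X) ∧ ConflictFree F S ∧
      ∀ X ∈ 𝒢, Mx F X (Dset F S X) ⊆ rng (Fres F X (Dset F S X)) (S ∩ X) := by
  classical
  induction 𝒢 using Finset.strongInductionOn with
  | _ 𝒢 ih =>
    intro h𝒢
    rcases Finset.eq_empty_or_nonempty 𝒢 with rfl | hne
    · refine ⟨∅, Set.empty_subset _, fun x hx => absurd hx (Set.notMem_empty x),
        conflictFree_empty F, fun X hX => absurd hX (Finset.notMem_empty X)⟩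
    · obtain ⟨Y, hYmem, hminY⟩ := finset_exists_min (sccBelow F) 𝒢 hne
        (fun x hx y hy z hz => sccBelow_trans F (h𝒢 x hx) (h𝒢 y hy) (h𝒢 z hz))
        (fun x _ => sccBelow_irrefl F x)
      have hY : IsSCC F Y := h𝒢 Y hYmem
      set 𝒢' := 𝒢.erase Y with h𝒢'def
      have h𝒢'sub : 𝒢' ⊆ 𝒢 := Finset.erase_subset Y 𝒢
      obtain ⟨S', hS'A, hS'sub, hS'cf, hS'cond⟩ :=
        ih 𝒢' (Finset.erase_ssubset hYmem) (fun X hX => h𝒢 X (h𝒢'sub hX))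
      have hYcnt : Y.Countable := by
        obtain ⟨a, _, rfl⟩ := hY
        exact scc_countable F hF a
      have hU : Y ⊆ Set.range (enumOf Y) := enumOf_spec hYcnt
      set D := Dset F S' Y with hDdef
      obtain ⟨T, hTcf, hTrng⟩ := Mx_realizable F hF hU D
      have hTY : T ⊆ F.A ∩ (Y \ D) := hTcf.1
      set S := S' ∪ T with hSdef
      -- members of S' avoid Y
      have hS'Y : ∀ x ∈ S', x ∉ Y := by
        intro x hx hxY
        obtain ⟨X', hX'mem, hxX'⟩ := hS'sub x hx
        have hX'ne : X' ≠ Y := Finset.ne_of_mem_erase hX'mem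
        exact scc_disjoint F (h𝒢 X' (h𝒢'sub hX'mem)) hY hX'ne hxX' hxY
      -- D is unchanged when passing from S' to S
      have hDeq : Dset F S Y = Dset F S' Y := by
        ext b
        constructor
        · rintro ⟨hbY, u, ⟨huS, huY⟩, hR⟩
          rcases huS with huS' | huT
          · exact ⟨hbY, u, ⟨huS', huY⟩, hR⟩
          · exact absurd (hTY huT).2.1 huY
        · rintro ⟨hbY, u, ⟨huS', huY⟩, hR⟩
          exact ⟨hbY, u, ⟨Or.inl huS', huY⟩, hR⟩
      have hSY : S ∩ Y = T := by
        ext x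
        constructor
        · rintro ⟨hxS | hxT, hxY⟩
          · exact absurd hxY (hS'Y x hxS)
          · exact hxT
        · intro hxT
          exact ⟨Or.inr hxT, (hTY hxT).2.1⟩
      -- conflict-freeness of S
      have hScf : ConflictFree F S := by
        constructor
        · rintro x (hx | hx)
          · exact hS'A hx
          · exact (hTY hx).1
        · rintro p (hp | hp) q (hq | hq) hR
          · exact hS'cf.2 p hp q hq hR
          · -- p ∈ S', q ∈ T : then q ∈ D, contradiction
            have hqD : q ∈ D := ⟨(hTY hq).2.1, p, ⟨hp, hS'Y p hp⟩, hR⟩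
            exact (hTY hq).2.2 hqD
          · -- p ∈ T, q ∈ S' : contradicts minimality of Y
            obtain ⟨X', hX'mem, hqX'⟩ := hS'sub q hq
            have hX'ne : X' ≠ Y := Finset.ne_of_mem_erase hX'mem
            refine hminY X' (h𝒢'sub hX'mem) ?_
            exact ⟨hX'ne, p, q, (hTY hp).2.1, hqX', reach_of_R F hR⟩
          · exact hTcf.2 p hp q hq ⟨hR, (hTY hp).2, (hTY hq).2⟩
      refine ⟨S, hScf.1, ?_, hScf, ?_⟩
      · rintro x (hx | hx)
        · obtain ⟨X', hX'mem, hxX'⟩ := hS'sub x hx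
          exact ⟨X', h𝒢'sub hX'mem, hxX'⟩
        · exact ⟨Y, hYmem, (hTY hx).2.1⟩
      · intro X hXmem
        by_cases hXY : X = Y
        · subst hXY
          rw [show Dset F S X = D from hDeq, hSY]
          exact hTrng
        · have hXmem' : X ∈ 𝒢' := Finset.mem_erase.mpr ⟨hXY, hXmem⟩
          have hDX : Dset F S X = Dset F S' X := by
            ext b
            constructor
            · rintro ⟨hbX, u, ⟨huS, huX⟩, hR⟩
              rcases huS with huS' | huT
              · exact ⟨hbX, u, ⟨huS', huX⟩, hR⟩
              · exfalso
                refine hminY X hXmem ?_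
                exact ⟨hXY, u, b, (hTY huT).2.1, hbX, reach_of_R F hR⟩
            · rintro ⟨hbX, u, ⟨huS', huX⟩, hR⟩
              exact ⟨hbX, u, ⟨Or.inl huS', huX⟩, hR⟩
          have hSX : S ∩ X = S' ∩ X := by
            ext x
            constructor
            · rintro ⟨hxS | hxT, hxX⟩
              · exact ⟨hxS, hxX⟩
              · exfalso
                exact scc_disjoint F hY (h𝒢 X hXmem) (Ne.symm hXY) ((hTY hxT).2.1) hxX
            · rintro ⟨hxS', hxX⟩
              exact ⟨Or.inl hxS', hxX⟩
          rw [hDX, hSX]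
          exact hS'cond X hXmem'

end FinSol

end StgAux

namespace StgAux

open AF

variable {α : Type u}

section Main

variable [Nonempty α]

set_option linter.unusedSectionVars false

attribute [local instance] Classical.propDecidable

theorem main (F : AF α) (hF : Finitary F) : ∃ S, STG15 F S := by
  classical
  -- the support of the coverage constraint at (a, x)
  let Wset : α → α → Set α := fun a x =>
    insert x (Vn F (SCCof F a) (fIdx (SCCof F a) x + 1) ∪ {y | F.R y x})
  have hWfin : ∀ a x, (Wset a x).Finite := fun a x =>
    (((Vn_finite F hF (SCCof F a) _).union (hF x)).insert x)
  let suppSet : α → α → Set α := fun a x => Wset a x ∪ ⋃ v ∈ Wset a x, {y | F.R y v}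
  have hsuppfin : ∀ a x, (suppSet a x).Finite := fun a x =>
    (hWfin a x).union ((hWfin a x).biUnion (fun v _ => hF v))
  -- the constraints
  let P : (((α × α) ⊕ α) ⊕ (α × α)) → Set α → Prop := fun i S => match i with
    | .inl (.inl (u, v)) => F.R u v → u ∈ S → v ∈ S → False
    | .inl (.inr u) => u ∈ S → u ∈ F.A
    | .inr (a, x) => a ∈ F.A → x ∈ SCCof F a →
        x ∈ Mx F (SCCof F a) (Dset F S (SCCof F a)) →
        x ∈ rng (Fres F (SCCof F a) (Dset F S (SCCof F a))) (S ∩ SCCof F a)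
  let supp : (((α × α) ⊕ α) ⊕ (α × α)) → Finset α := fun i => match i with
    | .inl (.inl (u, v)) => {u, v}
    | .inl (.inr u) => {u}
    | .inr (a, x) => (hsuppfin a x).toFinset
  have hsol : ∃ S, ∀ i, P i S := by
    refine master P supp ?_ ?_
    · -- dependence only on the support
      rintro ((⟨u, v⟩ | u) | ⟨a, x⟩) S S' hag h
      · intro hR hu hv
        exact h hR ((hag u (by simp [supp])).mpr hu) ((hag v (by simp [supp])).mpr hv)
      · intro hu
        exact h ((hag u (by simp [supp])).mpr hu)
      · intro haA hxX hxM
        -- agreement on the support set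
        have hagS : ∀ b ∈ suppSet a x, (b ∈ S ↔ b ∈ S') := by
          intro b hb
          exact hag b (by simpa [supp] using (hsuppfin a x).mem_toFinset.mpr hb)
        have hWsub : ∀ v ∈ Wset a x, v ∈ suppSet a x := fun v hv => Or.inl hv
        have hattsub : ∀ v ∈ Wset a x, ∀ y, F.R y v → y ∈ suppSet a x := by
          intro v hv y hy
          exact Or.inr (Set.mem_biUnion hv hy)
        -- the deletion sets agree on Wset
        have hDag : ∀ v ∈ Wset a x,
            (v ∈ Dset F S (SCCof F a) ↔ v ∈ Dset F S' (SCCof F a)) := by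
          intro v hv
          constructor
          · rintro ⟨hvX, u, ⟨huS, huX⟩, hR⟩
            exact ⟨hvX, u, ⟨(hagS u (hattsub v hv u hR)).mp huS, huX⟩, hR⟩
          · rintro ⟨hvX, u, ⟨huS, huX⟩, hR⟩
            exact ⟨hvX, u, ⟨(hagS u (hattsub v hv u hR)).mpr huS, huX⟩, hR⟩
        have hXcnt : (SCCof F a).Countable := scc_countable F hF a
        have hU : SCCof F a ⊆ Set.range (enumOf (SCCof F a)) := enumOf_spec hXcnt
        have hxW : x ∈ Wset a x := Set.mem_insert x _
        -- transfer the Mx hypothesis back to S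
        have hVsub : ∀ v ∈ Vn F (SCCof F a) (fIdx (SCCof F a) x + 1), v ∈ Wset a x :=
          fun v hv => Set.mem_insert_of_mem _ (Or.inl hv)
        have hxM' : x ∈ Mx F (SCCof F a) (Dset F S (SCCof F a)) := by
          refine (Mx_congr F hU hxX ?_).mpr hxM
          intro v hv
          exact hDag v (hVsub v hv)
        have hres := h haA hxX hxM'
        -- transfer the conclusion to S'
        rcases hres with hmem | ⟨y, hyT, hR⟩
        · refine Or.inl ⟨(hagS x (hWsub x hxW)).mp hmem.1, hmem.2⟩
        · refine Or.inr ⟨y, ?_, ?_⟩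
          · have hyW : y ∈ Wset a x := Set.mem_insert_of_mem _ (Or.inr hR.1)
            exact ⟨(hagS y (hWsub y hyW)).mp hyT.1, hyT.2⟩
          · have hyW : y ∈ Wset a x := Set.mem_insert_of_mem _ (Or.inr hR.1)
            refine ⟨hR.1, ⟨hR.2.1.1, fun hD => hR.2.1.2 ((hDag y hyW).mpr hD)⟩,
              ⟨hR.2.2.1, fun hD => hR.2.2.2 ((hDag x hxW).mpr hD)⟩⟩
    · -- finite satisfiability
      intro J
      set 𝒢 : Finset (Set α) := J.biUnion (fun i => match i with
        | .inr (a, _) => if a ∈ F.A then {SCCof F a} else ∅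
        | _ => ∅) with h𝒢def
      have h𝒢 : ∀ X ∈ 𝒢, IsSCC F X := by
        intro X hX
        obtain ⟨i, _, hmem⟩ := Finset.mem_biUnion.mp hX
        match i with
        | .inl (.inl (u, v)) => exact absurd hmem (Finset.notMem_empty X)
        | .inl (.inr u) => exact absurd hmem (Finset.notMem_empty X)
        | .inr (a, x) =>
          have hmem' : X ∈ (if a ∈ F.A then ({SCCof F a} : Finset (Set α)) else ∅) := hmem
          by_cases ha : a ∈ F.A
          · rw [if_pos ha] at hmem'
            rw [Finset.mem_singleton.mp hmem']
            exact ⟨a, ha, rfl⟩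
          · rw [if_neg ha] at hmem'
            exact absurd hmem' (Finset.notMem_empty X)
      obtain ⟨S, hSA, _, hScf, hScond⟩ := finSol F hF 𝒢 h𝒢
      refine ⟨S, fun i hi => ?_⟩
      match i with
      | .inl (.inl (u, v)) => exact fun hR hu hv => hScf.2 u hu v hv hR
      | .inl (.inr u) => exact fun hu => hSA hu
      | .inr (a, x) =>
        intro haA hxX hxM
        have hXmem : SCCof F a ∈ 𝒢 := by
          refine Finset.mem_biUnion.mpr ⟨.inr (a, x), hi, ?_⟩
          show SCCof F a ∈ (if a ∈ F.A then ({SCCof F a} : Finset (Set α)) else ∅)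
          rw [if_pos haA]
          exact Finset.mem_singleton_self _
        exact hScond (SCCof F a) hXmem hxM
  obtain ⟨S, hP⟩ := hsol
  have hcf : ConflictFree F S :=
    ⟨fun u hu => hP (.inl (.inr u)) hu, fun p hp q hq hR => hP (.inl (.inl (p, q))) hR hp hq⟩
  refine ⟨S, hcf, ?_⟩
  rintro X ⟨a, haA, rfl⟩
  set D := Dset F S (SCCof F a) with hDdef
  have hXcnt : (SCCof F a).Countable := scc_countable F hF a
  have hU : SCCof F a ⊆ Set.range (enumOf (SCCof F a)) := enumOf_spec hXcnt
  have hsubA : S ∩ SCCof F a ⊆ (Fres F (SCCof F a) D).A := by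
    rintro x ⟨hxS, hxX⟩
    refine ⟨hcf.1 hxS, hxX, fun hxD => ?_⟩
    obtain ⟨_, u, ⟨huS, _⟩, hR⟩ := hxD
    exact hcf.2 u huS x hxS hR
  have hcfloc : ConflictFree (Fres F (SCCof F a) D) (S ∩ SCCof F a) :=
    ⟨hsubA, fun p hp q hq hR => hcf.2 p hp.1 q hq.1 hR.1⟩
  have H1 : Mx F (SCCof F a) D ⊆ rng (Fres F (SCCof F a) D) (S ∩ SCCof F a) := by
    intro x hx
    exact hP (.inr (a, x)) haA (Mx_subset_U F (SCCof F a) D hx) hx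
  have heq : rng (Fres F (SCCof F a) D) (S ∩ SCCof F a) = Mx F (SCCof F a) D := by
    have hmax := Mx_maximal F hU D hcfloc
    refine Set.Subset.antisymm ?_ H1
    by_contra hc
    exact hmax ⟨H1, fun h => hc h⟩
  refine ⟨hcfloc, ?_⟩
  rintro ⟨T, hTcf, hlt⟩
  rw [show (AF.rng (F.restrict (SCCof F a \ Dset F S (SCCof F a))) (S ∩ SCCof F a)) =
    Mx F (SCCof F a) D from heq] at hlt
  exact Mx_maximal F hU D hTcf hlt

end Main

end StgAux

/-- every finitary AF has a stg1.5-extension. -/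
theorem statement2 {α : Type u} (F : AF α) (hF : AF.Finitary F) :
    ∃ S, AF.STG15 F S := by
  classical
  cases isEmpty_or_nonempty α with
  | inl h =>
    refine ⟨∅, ⟨Set.empty_subset _, fun a ha => absurd ha (Set.notMem_empty a)⟩, ?_⟩
    rintro X ⟨a, _, _⟩
    exact (h.false a).elim
  | inr h =>
    exact StgAux.main F hF
end

section
/- For every argumentation framework F, every cf1.5-extension of F is a naive extension of F; consequently, the cf1.5 semantics satisfies I-maximality: if S₁ and S₂ are cf1.5-extensions of F with S₁ ⊆ S₂, then S₁ = S₂. -/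
/-!
Basic notions of abstract argumentation frameworks, following
Andrews–San Mauro, "SCC-recursiveness in infinite argumentation".
-/

universe u

/-- every cf1.5-extension is naive; hence cf1.5 satisfies
I-maximality. -/
theorem statement7 {α : Type u} (F : AF α) :
    (∀ S, AF.CF15 F S → AF.Naive F S) ∧
      ∀ S₁ S₂, AF.CF15 F S₁ → AF.CF15 F S₂ → S₁ ⊆ S₂ → S₁ = S₂ := by
  have main : ∀ S, AF.CF15 F S → AF.Naive F S := by
    intro S hS
    refine ⟨hS.1, fun T hT hST => ?_⟩
    apply Set.Subset.antisymm hST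
    intro a haT
    have haA : a ∈ F.A := hT.1 haT
    have haX : a ∈ AF.SCCof F a :=
      ⟨⟨haA, haA, Relation.ReflTransGen.refl⟩, ⟨haA, haA, Relation.ReflTransGen.refl⟩⟩
    have hnaive := hS.2 (AF.SCCof F a) ⟨a, haA, rfl⟩
    set X := AF.SCCof F a with hX
    -- a ∉ Dset
    have haD : a ∉ AF.Dset F S X := by
      rintro ⟨-, c, ⟨hcS, -⟩, hR⟩
      exact hT.2 c (hST hcS) a haT hR
    -- elements of S ∩ X are not in Dset
    have hSD : ∀ b ∈ S ∩ X, b ∉ AF.Dset F S X := by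
      rintro b ⟨hbS, -⟩ ⟨-, c, ⟨hcS, -⟩, hR⟩
      exact hS.1.2 c hcS b hbS hR
    -- the candidate set
    have hcf : AF.ConflictFree (F.restrict (X \ AF.Dset F S X)) ((S ∩ X) ∪ {a}) := by
      constructor
      · rintro b (hb | hb)
        · exact ⟨hS.1.1 hb.1, hb.2, hSD b hb⟩
        · rcases hb with rfl
          exact ⟨haA, haX, haD⟩
      · rintro b hb c hc ⟨hR, -, -⟩
        have hbT : b ∈ T := by
          rcases hb with hb | hb
          · exact hST hb.1
          · rcases hb with rfl; exact haT
        have hcT : c ∈ T := by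
          rcases hc with hc | hc
          · exact hST hc.1
          · rcases hc with rfl; exact haT
        exact hT.2 b hbT c hcT hR
    have := hnaive.2 ((S ∩ X) ∪ {a}) hcf Set.subset_union_left
    have : a ∈ S ∩ X := this ▸ Set.mem_union_right _ rfl
    exact this.1
  refine ⟨main, fun S₁ S₂ h1 h2 hsub => ?_⟩
  exact (main S₁ h1).2 S₂ h2.1 hsub
end

section
/- For every argumentation framework F, every stg1.5-extension of F is a naive extension of F; consequently, the stg1.5 semantics satisfies I-maximality: if S₁ and S₂ are stg1.5-extensions of F with S₁ ⊆ S₂, then S₁ = S₂. -/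
/-!
Basic notions of abstract argumentation frameworks, following
Andrews–San Mauro, "SCC-recursiveness in infinite argumentation".
-/

universe u

/-- every stg1.5-extension is naive; hence stg1.5 satisfies
I-maximality. -/
theorem statement8 {α : Type u} (F : AF α) :
    (∀ S, AF.STG15 F S → AF.Naive F S) ∧
      ∀ S₁ S₂, AF.STG15 F S₁ → AF.STG15 F S₂ → S₁ ⊆ S₂ → S₁ = S₂ := by
  have main : ∀ S, AF.STG15 F S → AF.Naive F S := by
    intro S hS
    refine ⟨hS.1, ?_⟩
    intro T hT hST
    by_contra hne
    obtain ⟨a, haT, haS⟩ : ∃ a, a ∈ T ∧ a ∉ S := by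
      by_contra h
      push_neg at h
      exact hne (Set.Subset.antisymm hST h)
    have haA : a ∈ F.A := hT.1 haT
    set X := AF.SCCof F a with hX
    have haX : a ∈ X := by
      refine ⟨⟨haA, haA, .refl⟩, ⟨haA, haA, .refl⟩⟩
    have hscc : AF.IsSCC F X := ⟨a, haA, rfl⟩
    have hstage := hS.2 X hscc
    -- T' := (S ∩ X) ∪ {a}
    set T' : Set α := insert a (S ∩ X) with hT'
    have hT'subT : T' ⊆ T := by
      intro b hb
      rcases hb with rfl | ⟨hbS, _⟩
      · exact haT
      · exact hST hbS
    -- elements of T' are not in Dset F S X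
    have hnotD : ∀ b ∈ T', b ∉ AF.Dset F S X := by
      intro b hb ⟨hbX, s, hsS, hsb⟩
      exact hT.2 s (hST hsS.1) b (hT'subT hb) hsb
    have hT'X : ∀ b ∈ T', b ∈ X := by
      intro b hb
      rcases hb with rfl | ⟨_, hbX⟩
      exacts [haX, hbX]
    set Fr := F.restrict (X \ AF.Dset F S X) with hFr
    have hT'cf : AF.ConflictFree Fr T' := by
      constructor
      · intro b hb
        exact ⟨hT.1 (hT'subT hb), hT'X b hb, hnotD b hb⟩
      · intro b hb c hc hbc
        exact hT.2 b (hT'subT hb) c (hT'subT hc) hbc.1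
    -- rng Fr (S ∩ X) ⊂ rng Fr T'
    have hsub : AF.rng Fr (S ∩ X) ⊆ AF.rng Fr T' := by
      rintro x (hx | ⟨y, hy, hyx⟩)
      · exact Or.inl (Set.mem_insert_of_mem _ hx)
      · exact Or.inr ⟨y, Set.mem_insert_of_mem _ hy, hyx⟩
    have hanotin : a ∉ AF.rng Fr (S ∩ X) := by
      rintro (⟨haS', _⟩ | ⟨y, ⟨hyS, _⟩, hyR, _⟩)
      · exact haS haS'
      · exact hT.2 y (hST hyS) a haT hyR
    have hain : a ∈ AF.rng Fr T' := Or.inl (Set.mem_insert _ _)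
    exact hstage.2 ⟨T', hT'cf, ⟨hsub, fun h => hanotin (h hain)⟩⟩
  refine ⟨main, fun S₁ S₂ h₁ h₂ hsub => (main S₁ h₁).2 S₂ h₂.1 hsub⟩
end

section
/- For every argumentation framework F, every icft-extension (tfcf2-extension) of F is a naive extension of F; consequently, the icft semantics satisfies I-maximality: if S₁ and S₂ are icft-extensions of F with S₁ ⊆ S₂, then S₁ = S₂. -/
/-!
Basic notions of abstract argumentation frameworks, following
Andrews–San Mauro, "SCC-recursiveness in infinite argumentation".
-/

universe u

/-!
Let `S` be an icft-extension and `T ⊇ S` conflict-free, and take `a ∈ T`. No argument of `S`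
attacks `a`, so `a` is never removed by a `D_S` step and lies in every `C_S^α(a)`, in particular
in `C := C_S^{α_S(a)}(a)`. Then `(S ∩ C) ∪ {a} ⊆ T` is conflict-free in `F↾C`, so naivety of
`S ∩ C` there forces `a ∈ S`. Hence `S = T`, i.e. `S` is naive, and I-maximality follows.
-/

namespace AF

variable {α : Type u} {F : AF α} {S T : Set α} {a : α}

lemma mem_SCCof_self_s9 (h : a ∈ F.A) : a ∈ F.SCCof a :=
  ⟨⟨h, h, .refl⟩, ⟨h, h, .refl⟩⟩

lemma ConflictFree.restrict_of_subset (hT : F.ConflictFree T) {C U : Set α} (hUT : U ⊆ T)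
    (hUC : U ⊆ C) : (F.restrict C).ConflictFree U :=
  ⟨fun _ hx => ⟨hT.1 (hUT hx), hUC hx⟩,
    fun x hx y hy hxy => hT.2 x (hUT hx) y (hUT hy) hxy.1⟩

lemma mem_Cseq_of_not_attacked (ha : a ∈ F.A) (hS : ∀ s ∈ S, ¬ F.R s a) (o : Ordinal.{0}) :
    a ∈ F.Cseq S a o := by
  induction o using Ordinal.limitRecOn with
  | zero =>
    rw [Cseq, Ordinal.limitRecOn_zero]
    exact mem_SCCof_self_s9 ha
  | add_one o ih =>
    rw [Cseq, Ordinal.limitRecOn_add_one]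
    exact mem_SCCof_self_s9 ⟨ha, ih, fun ⟨_, s, ⟨hs, _⟩, hsa⟩ => hS s hs hsa⟩
  | limit o ho ih =>
    rw [Cseq, Ordinal.limitRecOn_limit _ _ _ _ ho]
    exact mem_SCCof_self_s9 ⟨ha, Set.mem_iInter.mpr fun β => ih β.1 β.2⟩

theorem ICFT.naive (hS : F.ICFT S) : F.Naive S := by
  refine ⟨hS.1, fun T hT hST => hST.antisymm fun a haT => ?_⟩
  have ha : a ∈ F.A := hT.1 haT
  set C := F.Cseq S a (F.alphaS S a)
  have haC : a ∈ C := mem_Cseq_of_not_attacked ha (fun s hs => hT.2 s (hST hs) a haT) _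
  obtain haC' | hnaive := hS.2 a ha
  · exact absurd haC haC'
  have hcf : (F.restrict C).ConflictFree (insert a (S ∩ C)) :=
    hT.restrict_of_subset (Set.insert_subset haT (Set.inter_subset_left.trans hST))
      (Set.insert_subset haC Set.inter_subset_right)
  have heq := hnaive.2 _ hcf (Set.subset_insert a _)
  exact (heq ▸ Set.mem_insert a _ : a ∈ S ∩ C).1

end AF

/-- every icft-extension is naive; hence icft satisfies
I-maximality. -/
theorem statement9 {α : Type u} (F : AF α) :
    (∀ S, AF.ICFT F S → AF.Naive F S) ∧
      ∀ S₁ S₂, AF.ICFT F S₁ → AF.ICFT F S₂ → S₁ ⊆ S₂ → S₁ = S₂ :=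
  ⟨fun _ hS => hS.naive, fun _ S₂ h₁ h₂ hsub => h₁.naive.2 S₂ h₂.1 hsub⟩
end

section
/- The cf1.5 and stg1.5 semantics do not satisfy weak reinstatement: for the argumentation framework F with arguments {a, b₀, b₁, b₂, b₃} and attacks a ↦ b₀, b₀ ↦ b₁, b₁ ↦ b₂, b₂ ↦ b₃, b₃ ↦ b₀, b₃ ↦ b₃, the set {a, b₂} is both a cf1.5-extension and a stg1.5-extension of F, but the grounded extension of F (which equals {a, b₁}) is not contained in {a, b₂}. -/
/-!
Basic notions of abstract argumentation frameworks, following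
Andrews–San Mauro, "SCC-recursiveness in infinite argumentation".
-/

universe u

/-- The AF of Figure 6: arguments `a = 0, b₀ = 1, b₁ = 2, b₂ = 3, b₃ = 4`,
attacks `a ↦ b₀ ↦ b₁ ↦ b₂ ↦ b₃ ↦ b₀` and `b₃ ↦ b₃`. -/
def F13 : AF (Fin 5) where
  A := Set.univ
  R x y := (x = 0 ∧ y = 1) ∨ (x = 1 ∧ y = 2) ∨ (x = 2 ∧ y = 3) ∨
    (x = 3 ∧ y = 4) ∨ (x = 4 ∧ y = 1) ∨ (x = 4 ∧ y = 4)
  attack_mem := fun _ _ _ => ⟨trivial, trivial⟩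


/-! ### Auxiliary lemmas for Statement 13 -/

open Relation

lemma F13R (x y : Fin 5) : F13.R x y ↔ ((x = 0 ∧ y = 1) ∨ (x = 1 ∧ y = 2) ∨ (x = 2 ∧ y = 3) ∨
    (x = 3 ∧ y = 4) ∨ (x = 4 ∧ y = 1) ∨ (x = 4 ∧ y = 4)) := Iff.rfl

lemma noR0 (y : Fin 5) : ¬ F13.R y 0 := by simp [F13R]

lemma reach_back (b : Fin 5) (h : Relation.ReflTransGen F13.R b 0) : b = 0 := by
  rcases h.cases_tail with h | ⟨c, _, hc⟩
  · exact h.symm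
  · exact absurd hc (noR0 c)

lemma cyc1 (i : Fin 5) (hi : i ∈ ({1, 2, 3, 4} : Set (Fin 5))) :
    Relation.ReflTransGen F13.R 1 i ∧ Relation.ReflTransGen F13.R i 1 := by
  have s12 : Relation.ReflTransGen F13.R 1 2 := ReflTransGen.single ((F13R 1 2).mpr (by decide))
  have s23 : Relation.ReflTransGen F13.R 2 3 := ReflTransGen.single ((F13R 2 3).mpr (by decide))
  have s34 : Relation.ReflTransGen F13.R 3 4 := ReflTransGen.single ((F13R 3 4).mpr (by decide))
  have s41 : Relation.ReflTransGen F13.R 4 1 := ReflTransGen.single ((F13R 4 1).mpr (by decide))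
  simp only [Set.mem_insert_iff, Set.mem_singleton_iff] at hi
  rcases hi with rfl | rfl | rfl | rfl
  · exact ⟨ReflTransGen.refl, ReflTransGen.refl⟩
  · exact ⟨s12, (s23.trans s34).trans s41⟩
  · exact ⟨s12.trans s23, s34.trans s41⟩
  · exact ⟨(s12.trans s23).trans s34, s41⟩

lemma scc0 : AF.SCCof F13 0 = {0} := by
  ext b
  constructor
  · rintro ⟨-, -, -, hb⟩
    exact reach_back b hb
  · rintro rfl
    exact ⟨⟨trivial, trivial, ReflTransGen.refl⟩, ⟨trivial, trivial, ReflTransGen.refl⟩⟩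

lemma sccb (a : Fin 5) (ha : a ∈ ({1, 2, 3, 4} : Set (Fin 5))) :
    AF.SCCof F13 a = {1, 2, 3, 4} := by
  ext b
  constructor
  · rintro ⟨⟨-, -, hab⟩, -⟩
    by_contra hb
    have hb0 : b = 0 := by
      revert hb; fin_cases b <;> simp
    subst hb0
    have := reach_back a hab
    subst this
    revert ha; simp
  · intro hb
    exact ⟨⟨trivial, trivial, (cyc1 a ha).2.trans (cyc1 b hb).1⟩,
           ⟨trivial, trivial, (cyc1 b hb).2.trans (cyc1 a ha).1⟩⟩

lemma U0eq : ({0} : Set (Fin 5)) \ AF.Dset F13 {0, 3} {0} = {0} := by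
  ext b
  simp only [AF.Dset, Set.mem_diff, Set.mem_setOf_eq, Set.mem_singleton_iff, Set.mem_diff,
    Set.mem_insert_iff, Set.mem_singleton_iff, F13R]
  constructor
  · rintro ⟨h, -⟩; exact h
  · rintro rfl
    refine ⟨rfl, ?_⟩
    rintro ⟨-, a, ⟨ha | ha, hne⟩, hr⟩ <;> subst ha <;> revert hr <;> simp

lemma U1eq : ({1, 2, 3, 4} : Set (Fin 5)) \ AF.Dset F13 {0, 3} {1, 2, 3, 4} =
    ({2, 3, 4} : Set (Fin 5)) := by
  have hd : AF.Dset F13 {0, 3} {1, 2, 3, 4} = ({1} : Set (Fin 5)) := by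
    ext b
    simp only [AF.Dset, Set.mem_setOf_eq, Set.mem_singleton_iff, Set.mem_diff,
      Set.mem_insert_iff, Set.mem_singleton_iff, F13R]
    constructor
    · rintro ⟨hb, a, ⟨ha | ha, hne⟩, hr⟩ <;> subst ha
      · revert hr; simp
      · exact absurd (by simp) hne
    · rintro rfl
      exact ⟨Or.inl rfl, 0, ⟨Or.inl rfl, by simp⟩, by simp⟩
  rw [hd]
  ext b
  fin_cases b <;> simp

lemma I0eq : ({0, 3} : Set (Fin 5)) ∩ {0} = {0} := by
  ext b; fin_cases b <;> simp

lemma I1eq : ({0, 3} : Set (Fin 5)) ∩ {1, 2, 3, 4} = ({3} : Set (Fin 5)) := by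
  ext b; fin_cases b <;> simp

lemma cf0 : AF.ConflictFree (F13.restrict {0}) {0} := by
  constructor
  · rintro x rfl; exact ⟨trivial, rfl⟩
  · rintro a rfl b rfl ⟨hr, -, -⟩
    exact absurd ((F13R 0 0).mp hr) (by decide)

lemma naive0 : AF.Naive (F13.restrict {0}) {0} := by
  refine ⟨cf0, ?_⟩
  intro T hT hsub
  refine Set.Subset.antisymm hsub fun x hx => ?_
  exact (hT.1 hx).2

lemma stage0 : AF.Stage (F13.restrict {0}) {0} := by
  refine ⟨cf0, ?_⟩
  rintro ⟨T, hT, hlt⟩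
  refine hlt.2 fun x hx => Or.inl ?_
  rcases hx with hx | ⟨y, hy, hr, -, hx⟩
  · exact (hT.1 hx).2
  · exact hx

lemma cf3 : AF.ConflictFree (F13.restrict {2, 3, 4}) {3} := by
  constructor
  · rintro x rfl; exact ⟨trivial, by simp⟩
  · rintro a rfl b rfl ⟨hr, -, -⟩
    exact absurd ((F13R 3 3).mp hr) (by decide)

lemma mem234 (x : Fin 5) (hx : x ∈ (F13.restrict {2, 3, 4}).A) :
    x = 2 ∨ x = 3 ∨ x = 4 := by
  rcases hx with ⟨-, hx⟩
  simpa using hx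

lemma R23' : (F13.restrict {2, 3, 4}).R 2 3 :=
  ⟨(F13R 2 3).mpr (by decide), by simp, by simp⟩

lemma R44' : (F13.restrict {2, 3, 4}).R 4 4 :=
  ⟨(F13R 4 4).mpr (by decide), by simp, by simp⟩

lemma naive3 : AF.Naive (F13.restrict {2, 3, 4}) {3} := by
  refine ⟨cf3, ?_⟩
  intro T hT hsub
  refine Set.Subset.antisymm hsub fun x hx => ?_
  rcases mem234 x (hT.1 hx) with rfl | rfl | rfl
  · exact absurd R23' (hT.2 2 hx 3 (hsub rfl))
  · rfl
  · exact absurd R44' (hT.2 4 hx 4 hx)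

lemma rng3 : AF.rng (F13.restrict {2, 3, 4}) {3} = ({3, 4} : Set (Fin 5)) := by
  ext b
  constructor
  · rintro (rfl | ⟨y, rfl, hr, -, -⟩)
    · exact Or.inl rfl
    · have := (F13R 3 b).mp hr
      have : b = 4 := by revert this; simp
      exact Or.inr this
  · rintro (rfl | rfl)
    · exact Or.inl rfl
    · exact Or.inr ⟨3, rfl, (F13R 3 4).mpr (by decide), by simp, by simp⟩

lemma stage3 : AF.Stage (F13.restrict {2, 3, 4}) {3} := by
  refine ⟨cf3, ?_⟩
  rintro ⟨T, hT, hlt⟩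
  rw [rng3] at hlt
  have h4T : (4 : Fin 5) ∉ T := fun h => hT.2 4 h 4 h R44'
  have h3rng : (3 : Fin 5) ∈ AF.rng (F13.restrict {2, 3, 4}) T := hlt.1 (Or.inl rfl)
  have h4rng : (4 : Fin 5) ∈ AF.rng (F13.restrict {2, 3, 4}) T := hlt.1 (Or.inr rfl)
  have h3or2 : (3 : Fin 5) ∈ T ∨ (2 : Fin 5) ∈ T := by
    rcases h3rng with h | ⟨y, hy, hr, -, -⟩
    · exact Or.inl h
    · have := (F13R y 3).mp hr
      have hy2 : y = 2 := by revert this; simp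
      exact Or.inr (hy2 ▸ hy)
  rcases h3or2 with h3 | h2
  · -- T ⊆ {3}, so rng T ⊆ {3,4}
    have hTsub : T ⊆ ({3} : Set (Fin 5)) := by
      intro x hx
      rcases mem234 x (hT.1 hx) with rfl | rfl | rfl
      · exact absurd R23' (hT.2 2 hx 3 h3)
      · rfl
      · exact absurd hx h4T
    refine hlt.2 fun x hx => ?_
    rcases hx with hx | ⟨y, hy, hr, -, -⟩
    · exact Or.inl (hTsub hx)
    · have := hTsub hy
      rcases this with rfl
      have := (F13R 3 x).mp hr
      have hx4 : x = 4 := by revert this; simp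
      exact Or.inr hx4
  · -- 2 ∈ T: then 3 ∉ T, and 4 cannot be in rng T
    have h3T : (3 : Fin 5) ∉ T := fun h => hT.2 2 h2 3 h R23'
    rcases h4rng with h | ⟨y, hy, hr, -, -⟩
    · exact h4T h
    · have := (F13R y 4).mp hr
      have hy34 : y = 3 ∨ y = 4 := by revert this; simp
      rcases hy34 with rfl | rfl
      · exact h3T hy
      · exact h4T hy

lemma cfS : AF.ConflictFree F13 {0, 3} := by
  constructor
  · intro x _; trivial
  · intro a ha b hb h
    simp only [Set.mem_insert_iff, Set.mem_singleton_iff] at ha hb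
    rcases ha with rfl | rfl <;> rcases hb with rfl | rfl <;>
      exact absurd ((F13R _ _).mp h) (by decide)

lemma gfix : AF.charF F13 {0, 2} = ({0, 2} : Set (Fin 5)) := by
  ext x
  simp only [AF.charF, Set.mem_setOf_eq, Set.mem_insert_iff, Set.mem_singleton_iff, F13R]
  constructor
  · rintro ⟨-, h⟩
    fin_cases x
    · exact Or.inl rfl
    · rcases h 0 (by decide) with ⟨z, hz | hz, hr⟩ <;> subst hz <;> revert hr <;> decide
    · exact Or.inr rfl
    · rcases h 2 (by decide) with ⟨z, hz | hz, hr⟩ <;> subst hz <;> revert hr <;> decide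
    · rcases h 4 (by decide) with ⟨z, hz | hz, hr⟩ <;> subst hz <;> revert hr <;> decide
  · rintro (rfl | rfl)
    · refine ⟨trivial, fun y hy => absurd hy ?_⟩
      revert y; decide
    · refine ⟨trivial, fun y hy => ?_⟩
      have h2 := (F13R y 2).mp hy
      have : y = 1 := by revert h2; simp
      subst this
      exact ⟨0, Or.inl rfl, by decide⟩

/-- cf1.5 and stg1.5 fail weak reinstatement: in `F13`,
`{a, b₂} = {0, 3}` is both a cf1.5- and a stg1.5-extension, the grounded
extension is `{a, b₁} = {0, 2}`, and it is not contained in `{0, 3}`. -/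
theorem statement13 :
    AF.CF15 F13 {0, 3} ∧ AF.STG15 F13 {0, 3} ∧
      AF.IsGrounded F13 {0, 2} ∧ ¬ (({0, 2} : Set (Fin 5)) ⊆ {0, 3}) := by
  refine ⟨⟨cfS, ?_⟩, ⟨cfS, ?_⟩, ⟨gfix, ?_⟩, ?_⟩
  · rintro X ⟨a, -, rfl⟩
    have ha : a = 0 ∨ a = 1 ∨ a = 2 ∨ a = 3 ∨ a = 4 := by omega
    rcases ha with rfl | rfl | rfl | rfl | rfl
    · rw [scc0, U0eq, I0eq]; exact naive0
    · rw [sccb 1 (by simp), U1eq, I1eq]; exact naive3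
    · rw [sccb 2 (by simp), U1eq, I1eq]; exact naive3
    · rw [sccb 3 (by simp), U1eq, I1eq]; exact naive3
    · rw [sccb 4 (by simp), U1eq, I1eq]; exact naive3
  · rintro X ⟨a, -, rfl⟩
    have ha : a = 0 ∨ a = 1 ∨ a = 2 ∨ a = 3 ∨ a = 4 := by omega
    rcases ha with rfl | rfl | rfl | rfl | rfl
    · rw [scc0, U0eq, I0eq]; exact stage0
    · rw [sccb 1 (by simp), U1eq, I1eq]; exact stage3
    · rw [sccb 2 (by simp), U1eq, I1eq]; exact stage3
    · rw [sccb 3 (by simp), U1eq, I1eq]; exact stage3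
    · rw [sccb 4 (by simp), U1eq, I1eq]; exact stage3
  · intro T hT
    have h0 : (0 : Fin 5) ∈ T := by
      rw [← hT]
      exact ⟨trivial, fun y hy => absurd hy (noR0 y)⟩
    have h2 : (2 : Fin 5) ∈ T := by
      rw [← hT]
      refine ⟨trivial, fun y hy => ?_⟩
      have hy1 : y = 1 := by
        have := (F13R y 2).mp hy; revert this; simp
      subst hy1
      exact ⟨0, h0, (F13R 0 1).mpr (by decide)⟩
    intro x hx
    rcases hx with rfl | hx
    · exact h0
    · rcases hx with rfl; exact h2
  · intro h
    have := h (Or.inr rfl)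
    rcases this with h | h <;> revert h <;> decide
end

section
/- The stg1.5 semantics fails both ⪯ᴱ∩- and ⪯ᴱ_W-skepticism adequacy: for the argumentation frameworks F and G on arguments {a, b, c} with attacks R_F = {(a,b), (b,a), (b,c), (c,b), (c,c)} and R_G = {(a,b), (c,b), (c,c)}, we have R_G ⊆ R_F, conf(F) = conf(G), the set of stg1.5-extensions of F is exactly {{b}}, and the set of stg1.5-extensions of G is exactly {{a}}; hence neither ⋂stg1.5(F) ⊆ ⋂stg1.5(G) nor 'for every S₂ ∈ stg1.5(G) there is S₁ ∈ stg1.5(F) with S₁ ⊆ S₂' holds. -/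
/-!
Basic notions of abstract argumentation frameworks, following
Andrews–San Mauro, "SCC-recursiveness in infinite argumentation".
-/

universe u

/-- The left AF of Figure 7: arguments `a = 0, b = 1, c = 2` with attacks
`a ↔ b`, `b ↔ c`, `c ↦ c`. -/
def F16 : AF (Fin 3) where
  A := Set.univ
  R x y := (x = 0 ∧ y = 1) ∨ (x = 1 ∧ y = 0) ∨ (x = 1 ∧ y = 2) ∨
    (x = 2 ∧ y = 1) ∨ (x = 2 ∧ y = 2)
  attack_mem := fun _ _ _ => ⟨trivial, trivial⟩

/-- The right AF of Figure 7: arguments `a = 0, b = 1, c = 2` with attacks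
`a ↦ b`, `c ↦ b`, `c ↦ c`. -/
def G16 : AF (Fin 3) where
  A := Set.univ
  R x y := (x = 0 ∧ y = 1) ∨ (x = 2 ∧ y = 1) ∨ (x = 2 ∧ y = 2)
  attack_mem := fun _ _ _ => ⟨trivial, trivial⟩


section Statement16Aux

open AF Relation Set

private lemma stage_of {F : AF (Fin 3)} {S : Set (Fin 3)} (hCF : AF.ConflictFree F S)
    (h : ∀ T, AF.ConflictFree F T → AF.rng F T ⊆ AF.rng F S) : AF.Stage F S :=
  ⟨hCF, fun ⟨T, hT, hsub⟩ => hsub.2 (h T hT)⟩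

private lemma F16_rtg : ∀ a b : Fin 3, Relation.ReflTransGen F16.R a b := by
  have h01 : Relation.ReflTransGen F16.R 0 1 := .single (by simp [F16])
  have h10 : Relation.ReflTransGen F16.R 1 0 := .single (by simp [F16])
  have h12 : Relation.ReflTransGen F16.R 1 2 := .single (by simp [F16])
  have h21 : Relation.ReflTransGen F16.R 2 1 := .single (by simp [F16])
  intro a b
  fin_cases a <;> fin_cases b
  exacts [.refl, h01, h01.trans h12, h10, .refl, h12, h21.trans h10, h21, .refl]

private lemma F16_scc (X : Set (Fin 3)) (h : AF.IsSCC F16 X) : X = Set.univ := by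
  obtain ⟨a, -, rfl⟩ := h
  ext b
  simp only [AF.SCCof, AF.Reach, Set.mem_setOf_eq, Set.mem_univ, iff_true]
  exact ⟨⟨trivial, trivial, F16_rtg a b⟩, ⟨trivial, trivial, F16_rtg b a⟩⟩

private lemma g_rtg1 : ∀ x, Relation.ReflTransGen G16.R 1 x → x = 1 := by
  intro x h
  induction h with
  | refl => rfl
  | tail _ h2 ih =>
    subst ih
    simp [G16] at h2

private lemma g_rtg0 : ∀ x, Relation.ReflTransGen G16.R 0 x → x = 0 ∨ x = 1 := by
  intro x h
  induction h with
  | refl => exact Or.inl rfl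
  | tail _ h2 ih =>
    rcases ih with rfl | rfl
    · simp only [G16] at h2
      rcases h2 with ⟨-, rfl⟩ | ⟨h, -⟩ | ⟨h, -⟩
      · exact Or.inr rfl
      all_goals exact absurd h (by decide)
    · simp [G16] at h2

private lemma g_rtg2 : ∀ x, Relation.ReflTransGen G16.R 2 x → x = 1 ∨ x = 2 := by
  intro x h
  induction h with
  | refl => exact Or.inr rfl
  | tail _ h2 ih =>
    rcases ih with rfl | rfl
    · simp [G16] at h2
    · simp only [G16] at h2
      rcases h2 with ⟨h, -⟩ | ⟨-, rfl⟩ | ⟨-, rfl⟩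
      · exact absurd h (by decide)
      · exact Or.inl rfl
      · exact Or.inr rfl

private lemma g_scc (a : Fin 3) : AF.SCCof G16 a = {a} := by
  ext b
  simp only [AF.SCCof, AF.Reach, Set.mem_setOf_eq, Set.mem_singleton_iff]
  constructor
  · rintro ⟨⟨-, -, hab⟩, -, -, hba⟩
    fin_cases a
    · rcases g_rtg0 b hab with rfl | rfl
      · rfl
      · exact absurd (g_rtg1 _ hba) (by decide)
    · exact g_rtg1 b hab
    · rcases g_rtg2 b hab with rfl | rfl
      · exact absurd (g_rtg1 _ hba) (by decide)
      · rfl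
  · rintro rfl
    exact ⟨⟨trivial, trivial, .refl⟩, ⟨trivial, trivial, .refl⟩⟩

private lemma g_isscc (X : Set (Fin 3)) (h : AF.IsSCC G16 X) :
    X = {0} ∨ X = {1} ∨ X = {2} := by
  obtain ⟨a, -, rfl⟩ := h
  rw [g_scc]
  fin_cases a
  · exact Or.inl rfl
  · exact Or.inr (Or.inl rfl)
  · exact Or.inr (Or.inr rfl)

private lemma dsetF_univ (S : Set (Fin 3)) : AF.Dset F16 S Set.univ = ∅ := by
  ext b; simp [AF.Dset]

private lemma dsetG0 (S : Set (Fin 3)) : AF.Dset G16 S {0} = ∅ := by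
  ext b
  simp only [AF.Dset, Set.mem_setOf_eq, Set.mem_singleton_iff, Set.mem_empty_iff_false,
    iff_false, not_and]
  rintro rfl ⟨a, -, hR⟩
  simp [G16] at hR

private lemma dsetG2 (S : Set (Fin 3)) : AF.Dset G16 S {2} = ∅ := by
  ext b
  simp only [AF.Dset, Set.mem_setOf_eq, Set.mem_singleton_iff, Set.mem_empty_iff_false,
    iff_false, not_and, Set.mem_diff]
  rintro rfl ⟨a, ⟨-, ha2⟩, hR⟩
  simp only [G16] at hR
  rcases hR with ⟨-, h⟩ | ⟨-, h⟩ | ⟨rfl, -⟩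
  · exact absurd h (by decide)
  · exact absurd h (by decide)
  · exact ha2 rfl

private lemma dsetG1 : AF.Dset G16 {0} {1} = {1} := by
  ext b
  simp only [AF.Dset, Set.mem_setOf_eq, Set.mem_singleton_iff]
  constructor
  · rintro ⟨rfl, -⟩; rfl
  · rintro rfl
    refine ⟨rfl, 0, ⟨rfl, by decide⟩, by simp [G16]⟩

/-- conflict-freeness of `{1}` in F16. -/
private lemma cfF1 : AF.ConflictFree (F16.restrict Set.univ) {1} := by
  constructor
  · exact fun x _ => ⟨trivial, trivial⟩
  · intro a ha b hb hR
    rw [Set.mem_singleton_iff] at ha hb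
    subst ha; subst hb
    have := hR.1
    simp [F16] at this

private lemma rngF1 : AF.rng (F16.restrict Set.univ) {1} = Set.univ := by
  ext x
  simp only [Set.mem_univ, iff_true]
  fin_cases x
  · exact Or.inr ⟨1, rfl, by simp [F16, AF.restrict]⟩
  · exact Or.inl rfl
  · exact Or.inr ⟨1, rfl, by simp [F16, AF.restrict]⟩

private lemma stg15_F1 : AF.STG15 F16 {1} := by
  constructor
  · constructor
    · exact fun x _ => trivial
    · intro a ha b hb hR
      rw [Set.mem_singleton_iff] at ha hb
      subst ha; subst hb
      simp [F16] at hR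
  · intro X hX
    rw [F16_scc X hX, dsetF_univ, Set.diff_empty, Set.inter_univ]
    refine stage_of cfF1 ?_
    intro T _
    rw [rngF1]
    exact Set.subset_univ _

private lemma stg15_F_unique (S : Set (Fin 3)) (hS : AF.STG15 F16 S) : S = {1} := by
  have h2 : (2 : Fin 3) ∉ S := fun h => hS.1.2 2 h 2 h (by simp [F16])
  by_cases h1 : (1 : Fin 3) ∈ S
  · have h0 : (0 : Fin 3) ∉ S := fun h => hS.1.2 0 h 1 h1 (by simp [F16])
    ext x
    fin_cases x
    · exact iff_of_false h0 (by decide)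
    · exact iff_of_true h1 rfl
    · exact iff_of_false h2 (by decide)
  · exfalso
    have hscc : AF.IsSCC F16 Set.univ := ⟨0, trivial, (F16_scc _ ⟨0, trivial, rfl⟩).symm⟩
    have hst := hS.2 Set.univ hscc
    rw [dsetF_univ, Set.diff_empty, Set.inter_univ] at hst
    refine hst.2 ⟨{1}, cfF1, ?_, ?_⟩
    · rw [rngF1]; exact Set.subset_univ _
    · rw [rngF1]
      intro hsub
      have h2r : (2 : Fin 3) ∈ AF.rng (F16.restrict Set.univ) S := hsub trivial
      rcases h2r with h | ⟨y, hy, hR, -⟩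
      · exact h2 h
      · simp only [F16] at hR
        rcases hR with ⟨-, h⟩ | ⟨-, h⟩ | ⟨rfl, -⟩ | ⟨-, h⟩ | ⟨rfl, -⟩
        · exact absurd h (by decide)
        · exact absurd h (by decide)
        · exact h1 hy
        · exact absurd h (by decide)
        · exact h2 hy

private lemma cfG0 : AF.ConflictFree (G16.restrict {0}) {0} := by
  constructor
  · exact fun x hx => ⟨trivial, hx⟩
  · intro a ha b hb hR
    rw [Set.mem_singleton_iff] at ha hb
    subst ha; subst hb
    have := hR.1
    simp [G16] at this

private lemma stage_G0 : AF.Stage (G16.restrict {0}) {0} := by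
  refine stage_of cfG0 ?_
  intro T hT x hx
  rcases hx with hxT | ⟨y, -, -, -, hx0⟩
  · exact Or.inl (hT.1 hxT).2
  · exact Or.inl hx0

private lemma stg15_G0 : AF.STG15 G16 {0} := by
  constructor
  · constructor
    · exact fun x _ => trivial
    · intro a ha b hb hR
      rw [Set.mem_singleton_iff] at ha hb
      subst ha; subst hb
      simp [G16] at hR
  · intro X hX
    rcases g_isscc X hX with rfl | rfl | rfl
    · rw [dsetG0, Set.diff_empty, Set.inter_self]
      exact stage_G0
    · rw [dsetG1, Set.diff_self]
      have hint : ({0} : Set (Fin 3)) ∩ {1} = ∅ := by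
        ext x
        simp only [Set.mem_inter_iff, Set.mem_singleton_iff, Set.mem_empty_iff_false, iff_false]
        rintro ⟨rfl, h⟩
        exact absurd h (by decide)
      rw [hint]
      refine stage_of ⟨fun x hx => hx.elim, fun a ha => ha.elim⟩ ?_
      intro T hT x hx
      rcases hx with hxT | ⟨y, hy, -⟩
      · exact absurd (hT.1 hxT).2 (Set.notMem_empty x)
      · exact absurd (hT.1 hy).2 (Set.notMem_empty y)
    · rw [dsetG2, Set.diff_empty]
      have hint : ({0} : Set (Fin 3)) ∩ {2} = ∅ := by
        ext x
        simp only [Set.mem_inter_iff, Set.mem_singleton_iff, Set.mem_empty_iff_false, iff_false]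
        rintro ⟨rfl, h⟩
        exact absurd h (by decide)
      rw [hint]
      refine stage_of ⟨fun x hx => hx.elim, fun a ha => ha.elim⟩ ?_
      intro T hT x hx
      have hconf : ∀ z ∈ T, False := by
        intro z hz
        have hz2 : z ∈ ({2} : Set (Fin 3)) := (hT.1 hz).2
        rw [Set.mem_singleton_iff] at hz2
        subst hz2
        exact hT.2 2 hz 2 hz ⟨by simp [G16], rfl, rfl⟩
      rcases hx with hxT | ⟨y, hy, -⟩
      · exact (hconf x hxT).elim
      · exact (hconf y hy).elim

private lemma stg15_G_unique (S : Set (Fin 3)) (hS : AF.STG15 G16 S) : S = {0} := by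
  have h2 : (2 : Fin 3) ∉ S := fun h => hS.1.2 2 h 2 h (by simp [G16])
  by_cases h0 : (0 : Fin 3) ∈ S
  · have h1 : (1 : Fin 3) ∉ S := fun h => hS.1.2 0 h0 1 h (by simp [G16])
    ext x
    fin_cases x
    · exact iff_of_true h0 rfl
    · exact iff_of_false h1 (by decide)
    · exact iff_of_false h2 (by decide)
  · exfalso
    have hscc : AF.IsSCC G16 ({0} : Set (Fin 3)) := ⟨0, trivial, (g_scc 0).symm⟩
    have hst := hS.2 {0} hscc
    rw [dsetG0, Set.diff_empty] at hst
    have hint : S ∩ {0} = ∅ := by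
      ext x
      simp only [Set.mem_inter_iff, Set.mem_singleton_iff, Set.mem_empty_iff_false, iff_false]
      rintro ⟨hxS, rfl⟩
      exact h0 hxS
    rw [hint] at hst
    refine hst.2 ⟨{0}, cfG0, ?_, ?_⟩
    · intro x hx
      rcases hx with h | ⟨y, hy, -⟩
      · exact h.elim
      · exact hy.elim
    · intro hsub
      have : (0 : Fin 3) ∈ AF.rng (G16.restrict {0}) (∅ : Set (Fin 3)) :=
        hsub (Or.inl rfl)
      rcases this with h | ⟨y, hy, -⟩
      · exact h
      · exact hy

end Statement16Aux
/-- stg1.5 fails both skepticism adequacy conditions. -/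
theorem statement16 :
    (∀ a b, G16.R a b → F16.R a b) ∧ AF.confl F16 = AF.confl G16 ∧
      {S | AF.STG15 F16 S} = {({1} : Set (Fin 3))} ∧
      {S | AF.STG15 G16 S} = {({0} : Set (Fin 3))} ∧
      ¬ (⋂₀ {S | AF.STG15 F16 S} ⊆ ⋂₀ {S | AF.STG15 G16 S}) ∧
      ¬ (∀ S₂, AF.STG15 G16 S₂ → ∃ S₁, AF.STG15 F16 S₁ ∧ S₁ ⊆ S₂) := by
  have hF : {S | AF.STG15 F16 S} = {({1} : Set (Fin 3))} := by
    ext S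
    simp only [Set.mem_setOf_eq, Set.mem_singleton_iff]
    exact ⟨stg15_F_unique S, fun h => h ▸ stg15_F1⟩
  have hG : {S | AF.STG15 G16 S} = {({0} : Set (Fin 3))} := by
    ext S
    simp only [Set.mem_setOf_eq, Set.mem_singleton_iff]
    exact ⟨stg15_G_unique S, fun h => h ▸ stg15_G0⟩
  refine ⟨?_, ?_, hF, hG, ?_, ?_⟩
  · intro a b h
    fin_cases a <;> fin_cases b <;> simp_all [F16, G16]
  · ext ⟨x, y⟩
    fin_cases x <;> fin_cases y <;> simp [AF.confl, F16, G16]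
  · rw [hF, hG, Set.sInter_singleton, Set.sInter_singleton]
    intro h
    have := h (Set.mem_singleton 1)
    rw [Set.mem_singleton_iff] at this
    exact absurd this (by decide)
  · intro h
    obtain ⟨S₁, hS₁, hsub⟩ := h {0} stg15_G0
    have := stg15_F_unique S₁ hS₁
    subst this
    have := hsub (Set.mem_singleton 1)
    rw [Set.mem_singleton_iff] at this
    exact absurd this (by decide)
end

section
/- Every finitary argumentation framework F has at least one stage extension. -/
/-!
Basic notions of abstract argumentation frameworks, following
Andrews–San Mauro, "SCC-recursiveness in infinite argumentation".
-/

universe u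

/-- every finitary AF has a stage extension. -/
theorem statement17 {α : Type u} (F : AF α) (hF : AF.Finitary F) :
    ∃ S, AF.Stage F S := by
  classical
  have key : ∀ c ⊆ {X : Set α | ∃ S, AF.ConflictFree F S ∧ AF.rng F S = X},
      IsChain (fun x1 x2 => x1 ⊆ x2) c →
      ∃ ub ∈ {X : Set α | ∃ S, AF.ConflictFree F S ∧ AF.rng F S = X}, ∀ s ∈ c, s ⊆ ub := by
    intro C hC hchain
    rcases C.eq_empty_or_nonempty with rfl | hne
    · exact ⟨AF.rng F ∅, ⟨∅, ⟨Set.empty_subset _, by simp⟩, rfl⟩, by simp⟩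
    choose Sf hcf hrng using fun i : C => (hC i.2 : ∃ s, AF.ConflictFree F s ∧ AF.rng F s = i)
    haveI : Nonempty C := hne.to_subtype
    haveI : IsDirected C (· ≤ ·) := by
      constructor
      intro i j
      rcases eq_or_ne (i : Set α) (j : Set α) with h | h
      · exact ⟨j, le_of_eq (Subtype.coe_injective h), le_refl j⟩
      · rcases hchain i.2 j.2 h with h' | h'
        · exact ⟨j, h', le_refl j⟩
        · exact ⟨i, le_refl i, h'⟩
    haveI : (Filter.atTop : Filter C).NeBot := Filter.atTop_neBot
    set U := Ultrafilter.of (Filter.atTop : Filter C) with hU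
    set S : Set α := {a | {i : C | a ∈ Sf i} ∈ U} with hS
    have hmemS : ∀ a, a ∈ S ↔ {i : C | a ∈ Sf i} ∈ U := fun a => Iff.rfl
    have hcfS : AF.ConflictFree F S := by
      constructor
      · intro a ha
        obtain ⟨i, hi⟩ := Ultrafilter.nonempty_of_mem ((hmemS a).mp ha)
        exact (hcf i).1 hi
      · intro a ha b hb
        obtain ⟨i, hia, hib⟩ := Ultrafilter.nonempty_of_mem
          (Filter.inter_mem ((hmemS a).mp ha) ((hmemS b).mp hb))
        exact (hcf i).2 a hia b hib
    refine ⟨AF.rng F S, ⟨S, hcfS, rfl⟩, ?_⟩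
    intro c hc x hx
    have hup : {i : C | c ⊆ (i : Set α)} ∈ U :=
      Ultrafilter.of_le _ (Filter.mem_of_superset (Filter.mem_atTop (⟨c, hc⟩ : C))
        (fun i hi => hi))
    by_cases hxS : x ∈ S
    · exact Or.inl hxS
    right
    by_contra hno
    -- x ∉ S and no attacker of x is in S
    have h1 : {i : C | x ∈ Sf i}ᶜ ∈ U := Ultrafilter.compl_mem_iff_notMem.mpr hxS
    have h2 : (⋂ y ∈ {y | F.R y x}, {i : C | y ∈ Sf i}ᶜ) ∈ (U : Filter C) := by
      rw [Filter.biInter_mem (hF x)]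
      intro y hy
      exact Ultrafilter.compl_mem_iff_notMem.mpr (fun hyS => hno ⟨y, hyS, hy⟩)
    obtain ⟨i, hic, hix, hiy⟩ := Ultrafilter.nonempty_of_mem
      (Filter.inter_mem hup (Filter.inter_mem h1 h2))
    have hxr : x ∈ AF.rng F (Sf i) := (hrng i).symm ▸ (hic hx)
    rcases hxr with hxr | ⟨y, hyS, hyR⟩
    · exact hix hxr
    · exact (Set.mem_iInter₂.mp hiy y hyR) hyS
  obtain ⟨M, hM⟩ := zorn_subset {X : Set α | ∃ S, AF.ConflictFree F S ∧ AF.rng F S = X} key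
  obtain ⟨S0, hcf0, hrng0⟩ := hM.prop
  refine ⟨S0, hcf0, ?_⟩
  rintro ⟨T, hcfT, hlt⟩
  have := hM.eq_of_subset ⟨T, hcfT, rfl⟩ (hrng0 ▸ hlt.subset)
  exact hlt.ne (hrng0.trans this)
end
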